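/- arXiv:1704.02800 — 5 statements merged into one kernel-verified Lean document; each statement's English description precedes it below -/
import Mathlib

section
/- If (Γ,γ) is an order-2p crystallization of a closed 3-manifold — i.e. a 4-colored graph with g_{î} = 1 for every i ∈ Δ₃ and χ(K(Γ)) = Σ_{i∈Δ₃} g_{î} − Σ_{{i,j}} g_{ij} + 2p = 0 — then ω_G(Γ) = 3ρ(Γ) if and only if g_{ij} = (p+2)/3 for all distinct i,j ∈ Δ₃. -/
/-!
Encode each color class as a fixed-point-free involution `ι_c` of the vertices. For three colors
`i, j, k` the permutations `σ = ι_i ι_j` and `τ = ι_j ι_k`, with `σ τ = ι_i ι_k`, form a hypermap,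
whose Euler characteristic is at most twice its number of components; this is proved by peeling
transpositions off `τ`. Each `{i, j}`-colored cycle of `Γ` splits into two cycles of `ι_i ι_j`, and
when `Γ_{ijk}` is connected `⟨σ, τ⟩` has at most two orbits, so `g_ij + g_jk + g_ik ≤ p + 2`.
Since `g_î = 1` and `χ(K(Γ)) = 0`, the six `g_ij` add up to `2p + 4`, so the four triple
inequalities are equalities (Gagliardi's relation), which forces `g_ij = g_kl` for complementary
pairs. If `a, b, c` are these three values, then `a + b + c = p + 2` and the regular genera of the
six cyclic permutations are `a - 1, b - 1, c - 1`, each twice. Hence `ω_G = a + b + c - 3` and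
`ρ = min (a, b, c) - 1`, and `ω_G = 3ρ` exactly when `a = b = c = (p + 2) / 3`.
-/

/-!
Basic framework: edge-colored graphs à la crystallization theory.

A `(d+1)`-colored graph (finite connected multigraph, regular of degree `d+1`, with a proper
edge-coloring by the color set `C`, `#C = d+1`) is encoded by giving, for each color `c`,
the perfect matching formed by the `c`-colored edges, i.e. a fixed-point-free involution
`inv c` on the vertex set `V` (connectedness is the separate predicate `Conn`).
-/

structure CGraph (C V : Type) where
  inv : C → V → V
  invol : ∀ c v, inv c (inv c v) = v
  no_fixed : ∀ c v, inv c v ≠ v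

namespace CGraph

variable {C V : Type}

/-- `g G B` = number of connected components of the spanning subgraph `Γ_B` consisting of
the edges whose color lies in `B`. -/
noncomputable def g (G : CGraph C V) (B : Set C) : ℕ :=
  Nat.card (Quotient (Relation.EqvGen.setoid (fun v w : V => ∃ c ∈ B, G.inv c v = w)))

/-- connectedness of the colored graph -/
def Conn (G : CGraph C V) : Prop := G.g Set.univ = 1

/-- the spanning subgraph `Γ_B` of edges colored in `B`, as a colored graph with color set `B` -/
def restrict (G : CGraph C V) (B : Set C) : CGraph B V where
  inv c v := G.inv c.val v
  invol c v := G.invol c.val v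
  no_fixed c v := G.no_fixed c.val v

/-- reachability in the colored graph -/
def reach (G : CGraph C V) : V → V → Prop :=
  Relation.EqvGen (fun v w : V => ∃ c, G.inv c v = w)

/-- the connected component of `G` containing `v0`, as a colored graph on the vertices
reachable from `v0` -/
def component (G : CGraph C V) (v0 : V) : CGraph C {w : V // G.reach v0 w} where
  inv c w := ⟨G.inv c w.val,
    Relation.EqvGen.trans _ _ _ w.property (Relation.EqvGen.rel _ _ ⟨c, rfl⟩)⟩
  invol c w := Subtype.ext (G.invol c w.val)
  no_fixed c w h := G.no_fixed c w.val (congrArg Subtype.val h)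

/-- A cyclic permutation of the (finite) color set: a permutation consisting of a single cycle
through all the colors.  Cyclic permutations `ε = (ε_0, …, ε_d)` of the color set, up to
rotation, correspond bijectively to such permutations `σ` (via `σ : ε_j ↦ ε_{j+1}`), and
taking the inverse cyclic permutation corresponds to `σ ↦ σ⁻¹`. -/
def IsCyclicPerm (σ : Equiv.Perm C) : Prop := σ.IsCycle ∧ ∀ c, σ c ≠ c

/-- Euler characteristic `χ_σ(Γ) = Σ_{j} g_{ε_j ε_{j+1}} + (1-(n-1))·p` of the surface of the
regular embedding associated with the cyclic permutation `σ`; here `n = #C`, the graph has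
order `2p` (i.e. `p = (#V)/2`), and the consecutive pairs `{ε_j, ε_{j+1}}` are exactly the
pairs `{c, σ c}`, `c ∈ C`. -/
noncomputable def chi (G : CGraph C V) (σ : Equiv.Perm C) : ℚ :=
  (∑ᶠ c : C, (G.g {c, σ c} : ℚ)) +
    (2 - (Nat.card C : ℚ)) * ((Nat.card V : ℚ) / 2)

/-- the genus `ρ_σ` of the regular embedding associated with `σ`:
for a connected graph it is `(2 - χ_σ)/2`; in general (`g G Set.univ` connected components)
it is the sum of the genera of the connected components, matching the convention that the
genus/G-degree of a disconnected colored graph is the sum over its connected components. -/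
noncomputable def rho (G : CGraph C V) (σ : Equiv.Perm C) : ℚ :=
  (2 * (G.g Set.univ : ℚ) - G.chi σ) / 2

/-- the Gurau degree `ω_G(Γ) = Σ ρ_ε(Γ)`, the sum over the cyclic permutations of the color
set up to inverse; each class `{σ, σ⁻¹}` has `ρ_σ = ρ_{σ⁻¹}`, whence the division by `2`. -/
noncomputable def omegaG (G : CGraph C V) : ℚ :=
  (∑ᶠ σ : {σ : Equiv.Perm C // IsCyclicPerm σ}, G.rho σ.val) / 2

/-- bipartiteness -/
def Bipartite (G : CGraph C V) : Prop := ∃ f : V → Bool, ∀ c v, f (G.inv c v) ≠ f v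

/-- color-preserving isomorphism of colored graphs -/
def IsIso {V' : Type} (G : CGraph C V) (G' : CGraph C V') : Prop :=
  ∃ e : V ≃ V', ∀ c v, e (G.inv c v) = G'.inv c (e v)

end CGraph

open Function Relation Equiv

theorem Relation.EqvGen.of_equivalence {X : Type*} {r s : X → X → Prop} (hs : Equivalence s)
    (h : ∀ x y, r x y → s x y) {x y : X} (hxy : EqvGen r x y) : s x y :=
  hs.eqvGen_iff.mp (EqvGen.mono h x y hxy)

theorem Relation.EqvGen.of_imp {X : Type*} {r s : X → X → Prop}
    (h : ∀ x y, r x y → EqvGen s x y) {x y : X} (hxy : EqvGen r x y) : EqvGen s x y :=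
  hxy.of_equivalence (EqvGen.is_equivalence s) h

theorem Relation.EqvGen.iff_of_forall {X : Type*} {r : X → X → Prop} {P : X → Prop}
    (h : ∀ x y, r x y → (P x ↔ P y)) {x y : X} (hxy : EqvGen r x y) : P x ↔ P y :=
  hxy.of_equivalence (s := fun x y => (P x ↔ P y)) ⟨fun _ => Iff.rfl, Iff.symm, Iff.trans⟩ h

theorem Nat.card_lt_card_of_surjective_of_not_injective {α β : Type*} [Finite α] {f : α → β}
    (hf : Surjective f) (hinj : ¬ Injective f) : Nat.card β < Nat.card α := by
  have := Fintype.ofFinite α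
  have : Finite β := .of_surjective f hf
  have := Fintype.ofFinite β
  simpa only [Nat.card_eq_fintype_card] using Fintype.card_lt_of_surjective_not_injective f hf hinj

theorem Nat.two_mul_card_le_card_of_surjective_of_exists_ne {α β : Type*} [Finite α] {f : α → β}
    (hf : Surjective f) (h : ∀ x, ∃ y ≠ x, f y = f x) : 2 * Nat.card β ≤ Nat.card α := by
  classical
  have := Fintype.ofFinite α
  have : Finite β := .of_surjective f hf
  have := Fintype.ofFinite β
  simp only [Nat.card_eq_fintype_card, ← Finset.card_univ]
  refine Finset.mul_card_image_le_card_of_maps_to (f := f) (fun _ _ => Finset.mem_univ _) 2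
    fun b _ => ?_
  obtain ⟨x, rfl⟩ := hf b
  obtain ⟨y, hyx, hy⟩ := h x
  exact Finset.one_lt_card.mpr ⟨x, by simp, y, by simp [hy], hyx.symm⟩

section NumClasses

variable {X : Type*} {r s : X → X → Prop}

-- `CGraph.g G B` is by definition `numClasses` of the relation of `B`-colored edges
noncomputable def numClasses (r : X → X → Prop) : ℕ :=
  Nat.card (Quotient (EqvGen.setoid r))

def classMap (h : ∀ x y, r x y → EqvGen s x y) :
    Quotient (EqvGen.setoid r) → Quotient (EqvGen.setoid s) :=
  Quotient.map id fun _ _ => EqvGen.of_imp h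

theorem classMap_surjective (h : ∀ x y, r x y → EqvGen s x y) : Surjective (classMap h) :=
  Quotient.ind fun x => ⟨Quotient.mk _ x, rfl⟩

theorem eqvGen_of_numClasses_eq_one (h : numClasses r = 1) (x y : X) : EqvGen r x y := by
  obtain ⟨q, hq⟩ := Nat.card_eq_one_iff_exists.mp h
  exact Quotient.exact ((hq (Quotient.mk _ x)).trans (hq (Quotient.mk _ y)).symm)

variable [Finite X]

theorem numClasses_le_card : numClasses r ≤ Nat.card X :=
  Nat.card_le_card_of_surjective _ Quotient.mk_surjective

theorem numClasses_le_of_imp (h : ∀ x y, r x y → EqvGen s x y) : numClasses s ≤ numClasses r :=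
  Nat.card_le_card_of_surjective _ (classMap_surjective h)

theorem numClasses_congr (h : ∀ x y, r x y → EqvGen s x y) (h' : ∀ x y, s x y → EqvGen r x y) :
    numClasses r = numClasses s :=
  (numClasses_le_of_imp h').antisymm (numClasses_le_of_imp h)

end NumClasses

section JoinPair

variable {X : Type*} {r : X → X → Prop} {a b : X}

def joinPair (r : X → X → Prop) (a b : X) (x y : X) : Prop := r x y ∨ x = a ∧ y = b

theorem eqvGen_joinPair_cases {x y : X} (h : EqvGen (joinPair r a b) x y) :
    EqvGen r x y ∨ (EqvGen r x a ∨ EqvGen r x b) ∧ (EqvGen r y a ∨ EqvGen r y b) := by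
  have hsymm := EqvGen.symm (r := r)
  have htrans := EqvGen.trans (r := r)
  induction h with
  | rel x y h =>
    rcases h with h | ⟨rfl, rfl⟩
    · exact .inl (.rel _ _ h)
    · exact .inr ⟨.inl (.refl _), .inr (.refl _)⟩
  | refl => exact .inl (.refl _)
  | symm x y _ ih => grind
  | trans x y z _ _ ih₁ ih₂ => grind

variable [Finite X]

theorem numClasses_joinPair_le : numClasses (joinPair r a b) ≤ numClasses r :=
  numClasses_le_of_imp fun _ _ h => .rel _ _ (.inl h)

theorem numClasses_joinPair_of_eqvGen (hab : EqvGen r a b) :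
    numClasses (joinPair r a b) = numClasses r :=
  numClasses_congr (by rintro x y (h | ⟨rfl, rfl⟩); exacts [.rel _ _ h, hab])
    fun _ _ h => .rel _ _ (.inl h)

theorem numClasses_joinPair_add_one_le (hab : ¬ EqvGen r a b) :
    numClasses (joinPair r a b) + 1 ≤ numClasses r := by
  have h : ∀ x y, r x y → EqvGen (joinPair r a b) x y := fun _ _ h => .rel _ _ (.inl h)
  refine Nat.card_lt_card_of_surjective_of_not_injective (classMap_surjective h) fun hinj => ?_
  exact hab (Quotient.exact (@hinj (Quotient.mk _ a) (Quotient.mk _ b)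
    (Quotient.sound (.rel _ _ (.inr ⟨rfl, rfl⟩)))))

theorem numClasses_le_numClasses_joinPair_add_one :
    numClasses r ≤ numClasses (joinPair r a b) + 1 := by
  classical
  have h : ∀ x y, r x y → EqvGen (joinPair r a b) x y := fun _ _ h => .rel _ _ (.inl h)
  let f (q : Quotient (EqvGen.setoid r)) : Option (Quotient (EqvGen.setoid (joinPair r a b))) :=
    if q = Quotient.mk _ b then none else some (classMap h q)
  refine (Nat.card_le_card_of_injective f ?_).trans_eq Finite.card_option
  -- only the class of `b` can be merged with another one, namely with the class of `a`
  have merge {x y : X} (hx : ¬ EqvGen r x b) (hy : ¬ EqvGen r y b)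
      (hxy : EqvGen (joinPair r a b) x y) : EqvGen r x y := by
    rcases eqvGen_joinPair_cases hxy with hxy | ⟨hxa | hxb, hya | hyb⟩
    exacts [hxy, .trans _ _ _ hxa (.symm _ _ hya), (hy hyb).elim, (hx hxb).elim, (hx hxb).elim]
  intro q₁ q₂ hq
  obtain ⟨x, rfl⟩ := Quotient.mk_surjective q₁
  obtain ⟨y, rfl⟩ := Quotient.mk_surjective q₂
  have hb (z : X) : Quotient.mk (EqvGen.setoid r) z = Quotient.mk _ b ↔ EqvGen r z b := Quotient.eq
  by_cases hx : EqvGen r x b <;> by_cases hy : EqvGen r y b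
  · exact Quotient.sound (.trans _ _ _ hx (.symm _ _ hy))
  · simp [f, hb, hx, hy] at hq
  · simp [f, hb, hx, hy] at hq
  · simp only [f, hb, hx, hy, ↓reduceIte, Option.some.injEq] at hq
    exact Quotient.sound (merge hx hy (Quotient.exact hq))

end JoinPair

section Cycles

variable {X : Type*}

theorem eqvGen_mul_swap_apply [DecidableEq X] {ρ : Perm X} {a b : X} {s : X → X → Prop}
    (hρ : ∀ x, s x (ρ x)) (hab : s a b) (x : X) : EqvGen s x ((ρ * swap a b) x) := by
  rw [Perm.mul_apply]
  rcases eq_or_ne x a with rfl | hxa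
  · rw [swap_apply_left]
    exact .trans _ _ _ (.rel _ _ hab) (.rel _ _ (hρ b))
  rcases eq_or_ne x b with rfl | hxb
  · rw [swap_apply_right]
    exact .trans _ _ _ (.symm _ _ (.rel _ _ hab)) (.rel _ _ (hρ a))
  · rw [swap_apply_of_ne_of_ne hxa hxb]
    exact .rel _ _ (hρ x)

noncomputable def numCycles (σ : Perm X) : ℕ := numClasses fun x y => σ x = y

variable [Finite X]

theorem numCycles_le_card (σ : Perm X) : numCycles σ ≤ Nat.card X := numClasses_le_card

theorem Equiv.Perm.SameCycle.eqvGen {σ : Perm X} {r : X → X → Prop}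
    (hr : ∀ x, EqvGen r x (σ x)) {x y : X} (h : σ.SameCycle x y) : EqvGen r x y := by
  obtain ⟨n, -, rfl⟩ := h.exists_pow_eq'
  clear h
  induction n with
  | zero => exact .refl x
  | succ n ih => rw [pow_succ', Perm.mul_apply]; exact .trans _ _ _ ih (hr _)

theorem eqvGen_apply_eq_iff_sameCycle {σ : Perm X} {x y : X} :
    EqvGen (fun x y => σ x = y) x y ↔ σ.SameCycle x y :=
  ⟨EqvGen.of_equivalence (Perm.SameCycle.equivalence σ) (by
      rintro x _ rfl; exact Perm.sameCycle_apply_right.mpr (.refl σ x)),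
    Perm.SameCycle.eqvGen fun _ => .rel _ _ rfl⟩

theorem numCycles_one : numCycles (1 : Perm X) = Nat.card X :=
  (Nat.card_eq_of_bijective _ ⟨fun _ _ h => Perm.sameCycle_one.mp
    (eqvGen_apply_eq_iff_sameCycle.mp (Quotient.exact h)), Quotient.mk_surjective⟩).symm

variable [DecidableEq X]

theorem numClasses_joinPair_mul_swap (ρ : Perm X) (a b : X) :
    numClasses (joinPair (fun x y => (ρ * swap a b) x = y) a b) =
      numClasses (joinPair (fun x y => ρ x = y) a b) := by
  have key (π : Perm X) (x y : X) (h : joinPair (fun x y => (π * swap a b) x = y) a b x y) :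
      EqvGen (joinPair (fun x y => π x = y) a b) x y := by
    rcases h with rfl | hxy
    · exact eqvGen_mul_swap_apply (fun _ => .inl rfl) (.inr ⟨rfl, rfl⟩) x
    · exact .rel _ _ (.inr hxy)
  refine numClasses_congr (key ρ) ?_
  simpa only [mul_swap_mul_self] using key (ρ * swap a b)

theorem numCycles_mul_swap_le (ρ : Perm X) (a b : X) :
    numCycles (ρ * swap a b) ≤ numCycles ρ + 1 :=
  calc numCycles (ρ * swap a b)
      ≤ numClasses (joinPair (fun x y => (ρ * swap a b) x = y) a b) + 1 :=
        numClasses_le_numClasses_joinPair_add_one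
    _ = numClasses (joinPair (fun x y => ρ x = y) a b) + 1 := by
        rw [numClasses_joinPair_mul_swap]
    _ ≤ numCycles ρ + 1 := Nat.add_le_add_right numClasses_joinPair_le 1

theorem numCycles_mul_swap_apply_self {τ : Perm X} {a : X} (ha : τ a ≠ a) :
    numCycles (τ * swap a (τ a)) = numCycles τ + 1 := by
  refine (numCycles_mul_swap_le τ a (τ a)).antisymm ?_
  have hfix : IsFixedPt (τ * swap a (τ a)) (τ a) := by
    rw [IsFixedPt, Perm.mul_apply, swap_apply_right]
  have hsep : ¬ EqvGen (fun x y => (τ * swap a (τ a)) x = y) a (τ a) := fun h =>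
    ha ((eqvGen_apply_eq_iff_sameCycle.mp h).symm.eq_of_left hfix)
  calc numCycles τ + 1 = numClasses (joinPair (fun x y => τ x = y) a (τ a)) + 1 := by
        rw [numClasses_joinPair_of_eqvGen (r := fun x y => τ x = y) (.rel _ _ rfl)]; rfl
    _ = numClasses (joinPair (fun x y => (τ * swap a (τ a)) x = y) a (τ a)) + 1 := by
        rw [numClasses_joinPair_mul_swap]
    _ ≤ numCycles (τ * swap a (τ a)) := numClasses_joinPair_add_one_le hsep

theorem Equiv.Perm.sameCycle_mul_swap {ρ : Perm X} {a b : X} (h : ¬ ρ.SameCycle a b) :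
    (ρ * swap a b).SameCycle a b := by
  set ρ' := ρ * swap a b
  -- walk along the `ρ`-cycle of `a`, on which `ρ'` agrees with `ρ` except at `a` itself
  suffices key : ∀ n, ρ'.SameCycle b a ∨ ρ'.SameCycle b ((ρ ^ (n + 1)) a) by
    have := key (orderOf ρ - 1)
    rwa [Nat.sub_add_cancel (orderOf_pos ρ), pow_orderOf_eq_one, Perm.one_apply, or_self,
      Perm.sameCycle_comm] at this
  intro n
  induction n with
  | zero =>
    have : ρ' b = ρ a := by rw [Perm.mul_apply, swap_apply_right]
    exact .inr (by rw [zero_add, pow_one, ← this]; exact Perm.sameCycle_apply_right.mpr (.refl _ _))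
  | succ n ih =>
    rcases ih with ih | ih
    · exact .inl ih
    set y := (ρ ^ (n + 1)) a
    by_cases hya : y = a
    · exact .inl (hya ▸ ih)
    have hyb : y ≠ b := fun hyb => h (hyb ▸ Perm.sameCycle_pow_right.mpr (.refl _ _))
    have : ρ' y = (ρ ^ (n + 1 + 1)) a := by
      rw [Perm.mul_apply, swap_apply_of_ne_of_ne hya hyb, pow_succ' ρ (n + 1), Perm.mul_apply]
    exact .inr (this ▸ Perm.sameCycle_apply_right.mpr ih)

theorem numCycles_mul_swap_add_one_le {ρ : Perm X} {a b : X} (h : ¬ ρ.SameCycle a b) :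
    numCycles (ρ * swap a b) + 1 ≤ numCycles ρ := by
  have hmerged := eqvGen_apply_eq_iff_sameCycle.mpr (Perm.sameCycle_mul_swap h)
  calc numCycles (ρ * swap a b) + 1
      = numClasses (joinPair (fun x y => (ρ * swap a b) x = y) a b) + 1 := by
        rw [numClasses_joinPair_of_eqvGen hmerged]; rfl
    _ = numClasses (joinPair (fun x y => ρ x = y) a b) + 1 := by
        rw [numClasses_joinPair_mul_swap]
    _ ≤ numCycles ρ := numClasses_joinPair_add_one_le (mt eqvGen_apply_eq_iff_sameCycle.mp h)

end Cycles

section EulerCharacteristic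

variable {X : Type*}

noncomputable def numOrbits (σ τ : Perm X) : ℕ := numClasses fun x y => σ x = y ∨ τ x = y

-- the Euler characteristic of the oriented surface of the hypermap `(σ, τ)` on the darts `X`
noncomputable def eulerChar (σ τ : Perm X) : ℤ :=
  numCycles σ + numCycles τ + numCycles (σ * τ) - Nat.card X

variable [Finite X]

theorem numOrbits_one (σ : Perm X) : numOrbits σ 1 = numCycles σ :=
  numClasses_congr (by rintro x y (h | rfl); exacts [.rel _ _ h, .refl _])
    fun _ _ h => .rel _ _ (Or.inl h)

theorem numOrbits_eq_numClasses_joinPair [DecidableEq X] (σ τ : Perm X) (a : X) :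
    numOrbits σ τ =
      numClasses (joinPair (fun x y => σ x = y ∨ (τ * swap a (τ a)) x = y) a (τ a)) := by
  refine numClasses_congr ?_ ?_
  · rintro x _ (rfl | rfl)
    · exact .rel _ _ (Or.inl (Or.inl rfl))
    · simpa only [mul_swap_mul_self] using eqvGen_mul_swap_apply
        (s := joinPair (fun x y => σ x = y ∨ (τ * swap a (τ a)) x = y) a (τ a))
        (fun _ => Or.inl (Or.inr rfl)) (Or.inr ⟨rfl, rfl⟩) x
  · rintro x _ ((rfl | rfl) | ⟨rfl, rfl⟩)
    · exact .rel _ _ (Or.inl rfl)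
    · exact eqvGen_mul_swap_apply (s := fun x y => σ x = y ∨ τ x = y)
        (fun _ => Or.inr rfl) (Or.inr rfl) x
    · exact .rel _ _ (Or.inr rfl)

theorem eulerChar_le_of_mul_swap [DecidableEq X] {σ τ : Perm X} {a : X} (ha : τ a ≠ a)
    (h : eulerChar σ (τ * swap a (τ a)) ≤ 2 * numOrbits σ (τ * swap a (τ a))) :
    eulerChar σ τ ≤ 2 * numOrbits σ τ := by
  set τ' := τ * swap a (τ a)
  have hτ : σ * τ = σ * τ' * swap a (τ a) := by rw [mul_assoc, mul_swap_mul_self]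
  have hsplit : numCycles τ' = numCycles τ + 1 := numCycles_mul_swap_apply_self ha
  have horb := numOrbits_eq_numClasses_joinPair σ τ a
  unfold eulerChar at h ⊢
  rw [hτ]
  -- if `a` and `τ a` share an orbit of `⟨σ, τ'⟩` the orbits do not change; otherwise they lie on
  -- different cycles of `σ * τ'`, which the transposition merges
  by_cases hab : EqvGen (fun x y => σ x = y ∨ τ' x = y) a (τ a)
  · have : numOrbits σ τ = numOrbits σ τ' := horb.trans (numClasses_joinPair_of_eqvGen hab)
    have := numCycles_mul_swap_le (σ * τ') a (τ a)
    omega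
  · have : numOrbits σ τ' ≤ numOrbits σ τ + 1 := by
      rw [horb]; exact numClasses_le_numClasses_joinPair_add_one
    have hρ : ¬ (σ * τ').SameCycle a (τ a) := fun hsc =>
      hab (hsc.eqvGen fun x => .trans _ (τ' x) _ (.rel _ _ (.inr rfl)) (.rel _ _ (.inl rfl)))
    have := numCycles_mul_swap_add_one_le hρ
    omega

theorem eulerChar_le (σ τ : Perm X) : eulerChar σ τ ≤ 2 * numOrbits σ τ := by
  classical
  induction h : Nat.card X - numCycles τ using Nat.strong_induction_on generalizing τ with
  | _ n ih =>
  by_cases hτ : τ = 1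
  · subst hτ
    simp only [eulerChar, mul_one, numCycles_one, numOrbits_one]
    omega
  obtain ⟨a, ha⟩ : ∃ a, τ a ≠ a := not_forall.mp fun h' => hτ (Equiv.ext h')
  refine eulerChar_le_of_mul_swap ha (ih _ ?_ _ rfl)
  have := numCycles_mul_swap_apply_self ha
  have := numCycles_le_card (τ * swap a (τ a))
  omega

end EulerCharacteristic

theorem Equiv.Perm.not_sameCycle_mul_apply_right {X : Type*} {I J : Perm X} (hI : Involutive I)
    (hJ : Involutive J) (hIfix : ∀ x, I x ≠ x) (hJfix : ∀ x, J x ≠ x) (v : X) :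
    ¬ (I * J).SameCycle v (J v) := by
  rintro ⟨m, hm⟩
  set α := I * J
  have hIinv : I⁻¹ = I := inv_eq_of_mul_eq_one_right (Equiv.ext hI)
  have hJinv : J⁻¹ = J := inv_eq_of_mul_eq_one_right (Equiv.ext hJ)
  have hconj : SemiconjBy J α α⁻¹ := by
    rw [SemiconjBy, mul_inv_rev, hIinv, hJinv, mul_assoc]
  have hflip (k : ℤ) (x : X) : J ((α ^ k) x) = (α ^ (-k)) (J x) := by
    rw [zpow_neg, ← inv_zpow]
    exact congrArg (· x) (hconj.zpow_right k).eq
  have hpow (i j : ℤ) (x : X) : (α ^ i) ((α ^ j) x) = (α ^ (i + j)) x := by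
    rw [zpow_add, Perm.mul_apply]
  -- `α ^ m v = J v` yields a fixed point of `J` if `m` is even and of `I = α * J` if `m` is odd
  obtain ⟨k, rfl | rfl⟩ := Int.even_or_odd' m
  · apply hJfix ((α ^ k) v)
    rw [hflip, ← hm, hpow, show -k + 2 * k = k by ring]
  · apply hIfix ((α ^ (k + 1)) v)
    have hIα (x : X) : I x = α (J x) := by rw [Perm.mul_apply, hJ]
    rw [hIα, hflip, ← hm, hpow, show -(k + 1) + (2 * k + 1) = k by ring, add_comm k 1,
      zpow_one_add]
    rfl

namespace CGraph

variable {C V : Type} (G : CGraph C V)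

def perm (c : C) : Perm V := Involutive.toPerm (G.inv c) (G.invol c)

@[simp] theorem perm_apply (c : C) (v : V) : G.perm c v = G.inv c v := rfl

theorem perm_involutive (c : C) : Involutive (G.perm c) := G.invol c

theorem numOrbits_le_two {i j k : C} (hB : G.g {i, j, k} = 1) :
    numOrbits (G.perm i * G.perm j) (G.perm j * G.perm k) ≤ 2 := by
  set R : V → V → Prop := fun x y => (G.perm i * G.perm j) x = y ∨ (G.perm j * G.perm k) x = y
  -- conjugation by `perm j` inverts both generators, so it permutes the orbits
  have hflip {x y : V} : EqvGen R x y → EqvGen R (G.inv j x) (G.inv j y) :=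
    EqvGen.of_equivalence (s := fun x y => EqvGen R (G.inv j x) (G.inv j y))
      ⟨fun _ => EqvGen.refl _, EqvGen.symm _ _, EqvGen.trans _ _ _⟩
      (by rintro x _ (rfl | rfl) <;> refine .symm _ _ (.rel _ _ ?_) <;> simp [R, G.invol])
  have hto : ∀ c ∈ ({i, j, k} : Set C), ∀ v, EqvGen R (G.inv c v) (G.inv j v) := by
    rintro c (rfl | rfl | rfl) v
    · exact .symm _ _ (.rel _ _ (Or.inl (by simp [G.invol])))
    · exact .refl _
    · exact .rel _ _ (Or.inr (by simp [G.invol]))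
  obtain ⟨q, -⟩ := Nat.card_eq_one_iff_exists.mp hB
  obtain ⟨v₀, -⟩ := Quotient.exists_rep q
  have hcover (w : V) : EqvGen R w v₀ ∨ EqvGen R w (G.inv j v₀) := by
    refine ((eqvGen_of_numClasses_eq_one hB v₀ w).iff_of_forall
      (P := fun x => EqvGen R x v₀ ∨ EqvGen R x (G.inv j v₀)) ?_).mp (.inl (.refl _))
    rintro x _ ⟨c, hc, rfl⟩
    have step (y : V) (hy : EqvGen R y v₀ ∨ EqvGen R y (G.inv j v₀)) :
        EqvGen R (G.inv c y) v₀ ∨ EqvGen R (G.inv c y) (G.inv j v₀) := by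
      rcases hy with hy | hy
      · exact .inr (.trans _ _ _ (hto c hc y) (hflip hy))
      · exact .inl (.trans _ _ _ (hto c hc y) (by simpa [G.invol] using hflip hy))
    exact ⟨step x, fun h => by simpa [G.invol] using step _ h⟩
  refine (Nat.card_le_card_of_surjective
    (fun t : Bool => cond t (Quotient.mk (EqvGen.setoid R) v₀) (Quotient.mk _ (G.inv j v₀)))
    (Quotient.ind fun w => ?_)).trans_eq (by simp)
  rcases hcover w with h | h
  exacts [⟨true, Quotient.sound (.symm _ _ h)⟩, ⟨false, Quotient.sound (.symm _ _ h)⟩]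

variable [Finite V]

theorem two_mul_g_pair_le_numCycles (i j : C) :
    2 * G.g {i, j} ≤ numCycles (G.perm i * G.perm j) := by
  have hstep : ∀ v w, (G.perm i * G.perm j) v = w →
      EqvGen (fun v w => ∃ c ∈ ({i, j} : Set C), G.inv c v = w) v w := by
    rintro v _ rfl
    exact .trans _ (G.inv j v) _ (.rel _ _ ⟨j, .inr rfl, rfl⟩) (.rel _ _ ⟨i, .inl rfl, rfl⟩)
  -- every bicolored cycle splits into two cycles of `perm i * perm j`, through `v` and `inv j v`
  refine Nat.two_mul_card_le_card_of_surjective_of_exists_ne (classMap_surjective hstep)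
    (Quotient.ind fun v => ⟨Quotient.mk _ (G.inv j v), fun h => ?_, ?_⟩)
  · exact Perm.not_sameCycle_mul_apply_right (G.perm_involutive i) (G.perm_involutive j)
      (G.no_fixed i) (G.no_fixed j) v (eqvGen_apply_eq_iff_sameCycle.mp (Quotient.exact h)).symm
  · exact Quotient.sound (.symm _ _ (.rel _ _ ⟨j, .inr rfl, rfl⟩))

theorem two_mul_sum_g_pair_le_card_add_four {i j k : C} (hB : G.g {i, j, k} = 1) :
    2 * (G.g {i, j} + G.g {j, k} + G.g {i, k}) ≤ Nat.card V + 4 := by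
  have hχ := eulerChar_le (G.perm i * G.perm j) (G.perm j * G.perm k)
  have hprod : G.perm i * G.perm j * (G.perm j * G.perm k) = G.perm i * G.perm k := by
    ext v; simp [G.invol]
  rw [eulerChar, hprod] at hχ
  have := G.two_mul_g_pair_le_numCycles i j
  have := G.two_mul_g_pair_le_numCycles j k
  have := G.two_mul_g_pair_le_numCycles i k
  have := G.numOrbits_le_two hB
  omega

end CGraph

theorem IsLeast.add_add_eq_three_mul_iff {α : Type*} [CommRing α] [LinearOrder α]
    [IsStrictOrderedRing α] {a b c m : α} (h : IsLeast {a, b, c} m) :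
    a + b + c = 3 * m ↔ a = b ∧ b = c := by
  have ha : m ≤ a := h.2 (by simp)
  have hb : m ≤ b := h.2 (by simp)
  have hc : m ≤ c := h.2 (by simp)
  constructor
  · intro hs
    rcases h.1 with rfl | rfl | rfl <;> constructor <;> linarith
  · rintro ⟨rfl, rfl⟩
    rcases h.1 with rfl | rfl | rfl <;> ring

section FourColors

open CGraph

variable {V : Type} (G : CGraph (Fin 4) V)

-- Gagliardi's relation `g_ij + g_jk + g_ik = p + 2` for the four triples of colors, in the
-- equivalent form: complementary pairs have equal `g`, and `g_01 + g_02 + g_03 = p + 2`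
structure CGraph.GagliardiRelation (p : ℕ) : Prop where
  g_23 : G.g {2, 3} = G.g {0, 1}
  g_13 : G.g {1, 3} = G.g {0, 2}
  g_12 : G.g {1, 2} = G.g {0, 3}
  sum : G.g {0, 1} + G.g {0, 2} + G.g {0, 3} = p + 2

theorem CGraph.gagliardiRelation_of_crystallization [Finite V] {p : ℕ}
    (horder : Nat.card V = 2 * p)
    (hcr : ∀ i : Fin 4, G.g {c | c ≠ i} = 1)
    (hchi : (∑ i : Fin 4, (G.g {c | c ≠ i} : ℚ)) -
        (∑ r : Fin 4, ∑ s : Fin 4, if r = s then 0 else (G.g {r, s} : ℚ)) / 2 +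
        2 * (p : ℚ) = 0) :
    G.GagliardiRelation p := by
  have hsum : G.g {0, 1} + G.g {0, 2} + G.g {0, 3} + G.g {1, 2} + G.g {1, 3} + G.g {2, 3} =
      2 * p + 4 := by
    have : (G.g {0, 1} + G.g {0, 2} + G.g {0, 3} + G.g {1, 2} + G.g {1, 3} + G.g {2, 3} : ℚ) =
        2 * p + 4 := by
      simp only [Fin.sum_univ_four, hcr] at hchi
      simp [Set.pair_comm] at hchi ⊢
      linarith
    exact_mod_cast this
  have h₀ := G.two_mul_sum_g_pair_le_card_add_four (i := 1) (j := 2) (k := 3)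
    (by convert hcr 0 using 2; ext c; fin_cases c <;> simp)
  have h₁ := G.two_mul_sum_g_pair_le_card_add_four (i := 0) (j := 2) (k := 3)
    (by convert hcr 1 using 2; ext c; fin_cases c <;> simp)
  have h₂ := G.two_mul_sum_g_pair_le_card_add_four (i := 0) (j := 1) (k := 3)
    (by convert hcr 2 using 2; ext c; fin_cases c <;> simp)
  have h₃ := G.two_mul_sum_g_pair_le_card_add_four (i := 0) (j := 1) (k := 2)
    (by convert hcr 3 using 2; ext c; fin_cases c <;> simp)
  -- the four inequalities add up to twice `hsum`, so each of them is an equality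
  exact ⟨by omega, by omega, by omega, by omega⟩

theorem CGraph.forall_g_pair_eq_iff {p : ℕ} (hG : G.GagliardiRelation p) (x : ℚ) :
    (∀ i j : Fin 4, i ≠ j → (G.g {i, j} : ℚ) = x) ↔
      (G.g {0, 1} : ℚ) = x ∧ (G.g {0, 2} : ℚ) = x ∧ (G.g {0, 3} : ℚ) = x := by
  refine ⟨fun h => ⟨h 0 1 (by decide), h 0 2 (by decide), h 0 3 (by decide)⟩, ?_⟩
  rintro ⟨h01, h02, h03⟩ i j hij
  fin_cases i <;> fin_cases j <;>
    simp [Set.pair_comm (1 : Fin 4) 0, Set.pair_comm (2 : Fin 4) 0, Set.pair_comm (3 : Fin 4) 0,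
      Set.pair_comm (2 : Fin 4) 1, Set.pair_comm (3 : Fin 4) 1, Set.pair_comm (3 : Fin 4) 2,
      hG.g_23, hG.g_13, hG.g_12, h01, h02, h03] at hij ⊢

theorem CGraph.rho_eq (hconn : G.Conn) {p : ℕ} (horder : Nat.card V = 2 * p)
    (σ : Perm (Fin 4)) : G.rho σ = 1 + p - (∑ c, (G.g {c, σ c} : ℚ)) / 2 := by
  rw [rho, chi, show G.g Set.univ = 1 from hconn, finsum_eq_sum_of_fintype, horder]
  simp
  ring

def fourCycle (a b c d : Fin 4) : Perm (Fin 4) := swap a b * swap b c * swap c d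

def cyclicPerms : Finset (Perm (Fin 4)) :=
  {fourCycle 0 1 2 3, fourCycle 0 3 2 1, fourCycle 0 1 3 2, fourCycle 0 2 3 1,
    fourCycle 0 2 1 3, fourCycle 0 3 1 2}

theorem isCyclicPerm_iff_mem_cyclicPerms (σ : Perm (Fin 4)) :
    IsCyclicPerm σ ↔ σ ∈ cyclicPerms := by
  revert σ
  unfold IsCyclicPerm Perm.IsCycle
  decide

theorem CGraph.omegaG_eq_sum : G.omegaG = (∑ σ ∈ cyclicPerms, G.rho σ) / 2 := by
  classical
  rw [omegaG, finsum_eq_sum_of_fintype,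
    Finset.sum_subtype cyclicPerms (fun σ => (isCyclicPerm_iff_mem_cyclicPerms σ).symm)]

theorem CGraph.rho_eq_of_isCyclicPerm (hconn : G.Conn) {p : ℕ} (horder : Nat.card V = 2 * p)
    (hG : G.GagliardiRelation p)
    {σ : Perm (Fin 4)} (hσ : IsCyclicPerm σ) : G.rho σ = G.g {0, σ (σ 0)} - 1 := by
  have h23 : (G.g {2, 3} : ℚ) = G.g {0, 1} := by exact_mod_cast hG.g_23
  have h13 : (G.g {1, 3} : ℚ) = G.g {0, 2} := by exact_mod_cast hG.g_13
  have h12 : (G.g {1, 2} : ℚ) = G.g {0, 3} := by exact_mod_cast hG.g_12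
  have hsum : (G.g {0, 1} + G.g {0, 2} + G.g {0, 3} : ℚ) = p + 2 := by exact_mod_cast hG.sum
  rw [G.rho_eq hconn horder]
  rw [isCyclicPerm_iff_mem_cyclicPerms] at hσ
  simp only [cyclicPerms, Finset.mem_insert, Finset.mem_singleton] at hσ
  simp only [Set.pair_comm] at h23 h13 h12 hsum
  -- the 4-cycle `σ` uses every pair of colors except `{0, σ (σ 0)}` and its complement
  rcases hσ with rfl | rfl | rfl | rfl | rfl | rfl <;>
    simp [Fin.sum_univ_four, fourCycle, swap_apply_def, Set.pair_comm] <;>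
    linarith

theorem CGraph.setOf_rho_eq (hconn : G.Conn) {p : ℕ} (horder : Nat.card V = 2 * p)
    (hG : G.GagliardiRelation p) :
    {x | ∃ σ, IsCyclicPerm σ ∧ G.rho σ = x} =
      {(G.g {0, 1} : ℚ) - 1, (G.g {0, 2} : ℚ) - 1, (G.g {0, 3} : ℚ) - 1} := by
  ext x
  constructor
  · rintro ⟨σ, hσ, rfl⟩
    have : σ (σ 0) = 1 ∨ σ (σ 0) = 2 ∨ σ (σ 0) = 3 := by
      rw [isCyclicPerm_iff_mem_cyclicPerms] at hσ
      revert σ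
      decide
    rw [G.rho_eq_of_isCyclicPerm hconn horder hG hσ]
    rcases this with h | h | h <;> simp [h]
  · have hρ {σ} (hσ : σ ∈ cyclicPerms) :=
      G.rho_eq_of_isCyclicPerm hconn horder hG ((isCyclicPerm_iff_mem_cyclicPerms σ).mpr hσ)
    rintro (rfl | rfl | rfl)
    · exact ⟨fourCycle 0 2 1 3, (isCyclicPerm_iff_mem_cyclicPerms _).mpr (by decide),
        by rw [hρ (by decide)]; simp [fourCycle, swap_apply_def]⟩
    · exact ⟨fourCycle 0 1 2 3, (isCyclicPerm_iff_mem_cyclicPerms _).mpr (by decide),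
        by rw [hρ (by decide)]; simp [fourCycle, swap_apply_def]⟩
    · exact ⟨fourCycle 0 1 3 2, (isCyclicPerm_iff_mem_cyclicPerms _).mpr (by decide),
        by rw [hρ (by decide)]; simp [fourCycle, swap_apply_def]⟩

theorem CGraph.omegaG_eq (hconn : G.Conn) {p : ℕ} (horder : Nat.card V = 2 * p)
    (hG : G.GagliardiRelation p) :
    G.omegaG = ((G.g {0, 1} : ℚ) - 1) + ((G.g {0, 2} : ℚ) - 1) + ((G.g {0, 3} : ℚ) - 1) := by
  rw [G.omegaG_eq_sum, Finset.sum_congr rfl fun σ hσ => G.rho_eq_of_isCyclicPerm hconn horder hG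
    ((isCyclicPerm_iff_mem_cyclicPerms σ).mpr hσ)]
  rw [cyclicPerms, Finset.sum_insert (by decide), Finset.sum_insert (by decide),
    Finset.sum_insert (by decide), Finset.sum_insert (by decide), Finset.sum_insert (by decide),
    Finset.sum_singleton]
  simp [fourCycle, swap_apply_def]
  ring

end FourColors

open CGraph in
/-- Proposition `uguaglianza_G-degree(n=3)`: if `Γ` is an order-`2p`
crystallization of a closed 3-manifold (`g_î = 1` for all `i` and `χ(K(Γ)) = 0`) and `ρmin` is
its regular genus, then `ω_G(Γ) = 3ρ(Γ)` iff `g_{ij} = (p+2)/3` for all distinct colors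
`i, j ∈ Δ₃`. -/
theorem stmt11 {p : ℕ} {ρmin : ℚ} {V : Type} [Finite V]
    (G : CGraph (Fin 4) V) (hconn : G.Conn) (horder : Nat.card V = 2 * p)
    (hcr : ∀ i : Fin 4, G.g {c | c ≠ i} = 1)
    (hchi : (∑ i : Fin 4, (G.g {c | c ≠ i} : ℚ)) -
        (∑ r : Fin 4, ∑ s : Fin 4, if r = s then 0 else (G.g {r, s} : ℚ)) / 2 +
        2 * (p : ℚ) = 0)
    (hrho : IsLeast {x : ℚ | ∃ σ : Equiv.Perm (Fin 4), IsCyclicPerm σ ∧ G.rho σ = x} ρmin) :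
    G.omegaG = 3 * ρmin ↔
      ∀ i j : Fin 4, i ≠ j → (G.g {i, j} : ℚ) = ((p : ℚ) + 2) / 3 := by
  have hG := G.gagliardiRelation_of_crystallization horder hcr hchi
  rw [G.setOf_rho_eq hconn horder hG] at hrho
  rw [G.omegaG_eq hconn horder hG, hrho.add_add_eq_three_mul_iff, G.forall_g_pair_eq_iff hG]
  have hsum : (G.g {0, 1} + G.g {0, 2} + G.g {0, 3} : ℚ) = p + 2 := by exact_mod_cast hG.sum
  constructor
  · rintro ⟨h₁, h₂⟩
    refine ⟨?_, ?_, ?_⟩ <;> linarith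
  · rintro ⟨h₁, h₂, h₃⟩
    constructor <;> linarith
end

section
/- Let (Γ,γ) be a 5-colored graph of order 2p. Then ω_G(Γ) = 3·( 6(p−1) − Σ_{{r,s}}(g_{rs} − 1) ), the sum over the ten unordered pairs of distinct colors in Δ₄. If moreover Γ represents a singular 4-manifold — i.e. every connected component Ξ (of order 2q_Ξ) of every 3-residue Γ_{{i,j,k}} satisfies g_{ij}(Ξ) + g_{ik}(Ξ) + g_{jk}(Ξ) = q_Ξ + 2 — then also ω_G(Γ) = 8(p−1) − 2·Σ_{{r,s,t}}(g_{rst} − 1), the sum over the ten unordered triples of distinct colors in Δ₄. -/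
namespace CGraph

/-- A 5-colored graph represents a singular 4-manifold iff every connected component `Ξ`
(of order `2q_Ξ`) of every 3-residue `Γ_{{i,j,k}}` satisfies
`g_{ij}(Ξ) + g_{ik}(Ξ) + g_{jk}(Ξ) = q_Ξ + 2` (i.e. every 3-residue represents the 2-sphere).
Here the component of `Γ_{{i,j,k}}` containing a vertex `v0` has vertex set
`{w // (Γ_{{i,j,k}}).reach v0 w}`, and the pair `{i,j}` of its colors is the subset
`{c | c.val = i ∨ c.val = j}` of its color set `{i,j,k}`. -/
def SingularCond {V : Type} (G : CGraph (Fin 5) V) : Prop :=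
  ∀ i j k : Fin 5, i ≠ j → i ≠ k → j ≠ k → ∀ v0 : V,
    ((((G.restrict {i, j, k}).component v0).g {c | c.val = i ∨ c.val = j} : ℚ) +
        (((G.restrict {i, j, k}).component v0).g {c | c.val = i ∨ c.val = k} : ℚ) +
        (((G.restrict {i, j, k}).component v0).g {c | c.val = j ∨ c.val = k} : ℚ)) =
      (Nat.card {w : V // (G.restrict ({i, j, k} : Set (Fin 5))).reach v0 w} : ℚ) / 2 + 2

end CGraph

/-!
Double counting. An ordered pair of distinct colours `(c, s)` satisfies `s = σ c` for exactly six
of the 24 cyclic permutations `σ` of five colours, so summing `ρ_σ` over them expresses `ω_G`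
through `Σ g_{rs}`. Under the singular-manifold condition, summing
`g_{ij}(Ξ) + g_{ik}(Ξ) + g_{jk}(Ξ) = q_Ξ + 2` over the components `Ξ` of `Γ_{ijk}` gives
`g_{ij} + g_{ik} + g_{jk} = p + 2 g_{ijk}`; summed over all triples, in each of which every pair
of colours lies three times, this trades `Σ g_{rs}` for `Σ g_{rst}`.
-/

open Finset Relation

theorem Nat.card_eq_finsum_card_fiber {α β : Type} [Finite α] [Finite β] (f : α → β) :
    Nat.card α = ∑ᶠ b, Nat.card {a // f a = b} := by
  have := Fintype.ofFinite β
  rw [finsum_eq_sum_of_fintype, ← Nat.card_sigma, Nat.card_congr (Equiv.sigmaFiberEquiv f)]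

theorem Finset.sum_sum_apply_eq_sum_sum_card_smul {ι α β M : Type} [Fintype α] [Fintype β]
    [DecidableEq β] [AddCommMonoid M] (S : Finset ι) (φ : ι → α → β) (f : α → β → M) :
    ∑ i ∈ S, ∑ c, f c (φ i c) = ∑ c, ∑ s, #{i ∈ S | φ i c = s} • f c s := by
  rw [sum_comm]
  refine sum_congr rfl fun c _ => ?_
  rw [← sum_fiberwise S (fun i => φ i c)]
  refine sum_congr rfl fun s _ => ?_
  rw [← sum_const]
  exact sum_congr rfl fun i hi => by rw [(mem_filter.1 hi).2]

namespace Relation.EqvGen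

variable {α : Type} {r t : α → α → Prop}

theorem subtype_of_le (hrt : r ≤ t) {z v w : α} (h : EqvGen r v w) (hv : EqvGen t z v)
    (hw : EqvGen t z w) :
    EqvGen (fun a b : {x // EqvGen t z x} => r a b) ⟨v, hv⟩ ⟨w, hw⟩ := by
  induction h with
  | rel a b hab => exact .rel _ _ hab
  | refl a => exact .refl _
  | symm a b _ ih => exact .symm _ _ (ih hw hv)
  | trans a b c hab _ ih₁ ih₂ =>
    have hb : EqvGen t z b := .trans _ _ _ hv (EqvGen.mono hrt _ _ hab)
    exact .trans _ _ _ (ih₁ hv hb) (ih₂ hb hw)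

theorem subtype_iff (hrt : r ≤ t) {z : α} {a b : {x // EqvGen t z x}} :
    EqvGen (fun a b : {x // EqvGen t z x} => r a b) a b ↔ EqvGen r a b :=
  ⟨fun h => Setoid.eqvGen_le (s := Setoid.comap Subtype.val (EqvGen.setoid r))
    (fun _ _ hab => EqvGen.rel _ _ hab) h, fun h => subtype_of_le hrt h a.2 b.2⟩

theorem card_quotient_eq_finsum [Finite α] (hrt : r ≤ t) :
    Nat.card (Quotient (EqvGen.setoid r)) = ∑ᶠ q : Quotient (EqvGen.setoid t),
      Nat.card (Quotient (EqvGen.setoid fun a b : {x // EqvGen t q.out x} => r a b)) := by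
  let F : Quotient (EqvGen.setoid r) → Quotient (EqvGen.setoid t) :=
    Quotient.map id (EqvGen.mono hrt)
  rw [Nat.card_eq_finsum_card_fiber F]
  refine finsum_congr fun q => (Nat.card_congr ?_).symm
  refine (Quotient.congrRight fun a b => subtype_iff hrt).trans
    ((Setoid.comapQuotientEquiv Subtype.val (EqvGen.setoid r)).trans
      (Equiv.subtypeEquivRight fun x => ?_))
  induction x using Quotient.inductionOn with
  | h v =>
    show (∃ a : {x // EqvGen t q.out x}, ⟦a.1⟧ = ⟦v⟧) ↔ ⟦v⟧ = q
    rw [Quotient.mk_eq_iff_out]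
    constructor
    · rintro ⟨⟨a, ha⟩, hav⟩
      exact .symm _ _ (.trans _ _ _ ha (EqvGen.mono hrt _ _ (Quotient.exact hav)))
    · exact fun hv => ⟨⟨v, .symm _ _ hv⟩, rfl⟩

theorem card_eq_finsum [Finite α] :
    Nat.card α = ∑ᶠ q : Quotient (EqvGen.setoid t), Nat.card {x // EqvGen t q.out x} := by
  rw [Nat.card_eq_finsum_card_fiber (Quotient.mk (EqvGen.setoid t))]
  exact finsum_congr fun q => Nat.card_congr <| Equiv.subtypeEquivRight fun a =>
    Quotient.mk_eq_iff_out.trans ⟨EqvGen.symm _ _, EqvGen.symm _ _⟩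

end Relation.EqvGen

section DistinctTriples

variable {α R : Type} [Fintype α] [DecidableEq α] [CommRing R]

theorem Finset.card_filter_ne_and_ne {r s : α} (hrs : r ≠ s) :
    #{t | r ≠ t ∧ s ≠ t} = Fintype.card α - 2 := by
  have : ({t | r ≠ t ∧ s ≠ t} : Finset α) = univ \ {r, s} := by ext; simp [eq_comm]
  rw [this, card_sdiff_of_subset (subset_univ _), card_univ, card_pair hrs]

theorem sum_ite_distinct_triple_left (f : α → α → R) :
    ∑ r, ∑ s, ∑ t, (if r ≠ s ∧ r ≠ t ∧ s ≠ t then f r s else 0) =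
      ((Fintype.card α : R) - 2) * ∑ r, ∑ s, if r = s then 0 else f r s := by
  simp only [mul_sum]
  refine sum_congr rfl fun r _ => sum_congr rfl fun s _ => ?_
  by_cases hrs : r = s
  · simp [hrs]
  · have hcard : 2 ≤ Fintype.card α := (card_pair hrs).symm.trans_le (card_le_univ _)
    rw [if_neg hrs, ← sum_filter, sum_const, nsmul_eq_mul]
    simp only [ne_eq, hrs, not_false_eq_true, true_and]
    rw [card_filter_ne_and_ne hrs, Nat.cast_sub hcard, Nat.cast_ofNat]

theorem sum_ite_distinct_triple_pairs (f : α → α → R) :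
    ∑ r, ∑ s, ∑ t, (if r ≠ s ∧ r ≠ t ∧ s ≠ t then f r s + f r t + f s t else 0) =
      3 * ((Fintype.card α : R) - 2) * ∑ r, ∑ s, if r = s then 0 else f r s := by
  have hrt : ∑ r, ∑ s, ∑ t, (if r ≠ s ∧ r ≠ t ∧ s ≠ t then f r t else 0) =
      ∑ r, ∑ s, ∑ t, (if r ≠ s ∧ r ≠ t ∧ s ≠ t then f r s else 0) := by
    refine sum_congr rfl fun r _ => ?_
    rw [sum_comm]
    exact sum_congr rfl fun s _ => sum_congr rfl fun t _ => if_congr (by tauto) rfl rfl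
  have hst : ∑ r, ∑ s, ∑ t, (if r ≠ s ∧ r ≠ t ∧ s ≠ t then f s t else 0) =
      ∑ r, ∑ s, ∑ t, (if r ≠ s ∧ r ≠ t ∧ s ≠ t then f r s else 0) := by
    rw [sum_comm]
    refine sum_congr rfl fun r _ => ?_
    rw [sum_comm]
    exact sum_congr rfl fun s _ => sum_congr rfl fun t _ => if_congr (by tauto) rfl rfl
  simp only [ite_add_zero, sum_add_distrib, hrt, hst, sum_ite_distinct_triple_left]
  ring

end DistinctTriples

theorem sum_ite_ne_sub_one_fin_five (x : Fin 5 → Fin 5 → ℚ) :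
    ∑ r, ∑ s, (if r = s then 0 else x r s - 1) = (∑ r, ∑ s, if r = s then 0 else x r s) - 20 := by
  simp only [Fin.sum_univ_five, Fin.reduceEq, zero_ne_one, one_ne_zero, ↓reduceIte]
  ring

theorem sum_ite_distinct_sub_one_fin_five (y : Fin 5 → Fin 5 → Fin 5 → ℚ) :
    ∑ r, ∑ s, ∑ t, (if r ≠ s ∧ r ≠ t ∧ s ≠ t then y r s t - 1 else 0) =
      (∑ r, ∑ s, ∑ t, if r ≠ s ∧ r ≠ t ∧ s ≠ t then y r s t else 0) - 60 := by
  simp only [Fin.sum_univ_five, ne_eq, Fin.reduceEq, zero_ne_one, one_ne_zero, not_true_eq_false,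
    not_false_eq_true, and_true, and_false, ↓reduceIte]
  ring

theorem sum_ite_distinct_affine_fin_five (a : ℚ) (y : Fin 5 → Fin 5 → Fin 5 → ℚ) :
    ∑ r, ∑ s, ∑ t, (if r ≠ s ∧ r ≠ t ∧ s ≠ t then a + 2 * y r s t else 0) =
      60 * a + 2 * ∑ r, ∑ s, ∑ t, if r ≠ s ∧ r ≠ t ∧ s ≠ t then y r s t else 0 := by
  simp only [Fin.sum_univ_five, ne_eq, Fin.reduceEq, zero_ne_one, one_ne_zero, not_true_eq_false,
    not_false_eq_true, and_true, and_false, ↓reduceIte]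
  ring

namespace CGraph

variable {C V : Type}

theorem isCyclicPerm_iff_forall_exists_pow {α : Type} [Fintype α] [Nontrivial α]
    (σ : Equiv.Perm α) (x : α) :
    IsCyclicPerm σ ↔ ∀ y, ∃ n < Fintype.card α, (σ ^ n) x = y := by
  classical
  constructor
  · rintro ⟨hcyc, hfree⟩ y
    obtain ⟨n, hn, hxy⟩ := (hcyc.sameCycle (hfree x) (hfree y)).exists_pow_eq'
    refine ⟨n, hn.trans_le ?_, hxy⟩
    rw [hcyc.orderOf]
    exact card_le_univ _
  · intro h
    have hsame : ∀ y, σ.SameCycle x y := fun y =>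
      let ⟨n, _, hn⟩ := h y
      ⟨n, by rwa [zpow_natCast]⟩
    have hfree : ∀ c, σ c ≠ c := by
      intro c hc
      obtain ⟨y, hy⟩ := exists_ne x
      exact hy ((hsame y).eq_of_left ((hsame c).apply_eq_self_iff.mpr hc)).symm
    exact ⟨⟨x, hfree x, fun y _ => hsame y⟩, hfree⟩

instance : DecidablePred (IsCyclicPerm (C := Fin 5)) := fun σ =>
  decidable_of_iff _ (isCyclicPerm_iff_forall_exists_pow σ 0).symm

theorem card_isCyclicPerm_fin_five : #{σ : Equiv.Perm (Fin 5) | IsCyclicPerm σ} = 24 := by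
  decide

theorem card_isCyclicPerm_apply_eq_fin_five (c s : Fin 5) :
    #{σ ∈ {σ : Equiv.Perm (Fin 5) | IsCyclicPerm σ} | σ c = s} = if c = s then 0 else 6 := by
  revert c s
  decide

theorem omegaG_eq_of_conn [Finite V] {G : CGraph (Fin 5) V} (hG : G.Conn) :
    G.omegaG = 12 + 9 * Nat.card V - 3 / 2 * ∑ r, ∑ s, if r = s then 0 else (G.g {r, s} : ℚ) := by
  have hrho : ∀ σ, G.rho σ = (2 + 3 / 2 * Nat.card V - ∑ c, (G.g {c, σ c} : ℚ)) / 2 := by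
    intro σ
    rw [rho, chi, hG, finsum_eq_sum_of_fintype, Nat.card_eq_fintype_card, Fintype.card_fin]
    ring
  have hpairs : ∑ σ ∈ {σ | IsCyclicPerm σ}, ∑ c, (G.g {c, σ c} : ℚ) =
      6 * ∑ r, ∑ s, if r = s then 0 else (G.g {r, s} : ℚ) := by
    rw [sum_sum_apply_eq_sum_sum_card_smul _ (fun (σ : Equiv.Perm (Fin 5)) c => σ c)
      fun c s => (G.g {c, s} : ℚ), mul_sum]
    refine sum_congr rfl fun r _ => ?_
    rw [mul_sum]
    refine sum_congr rfl fun s _ => ?_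
    rw [card_isCyclicPerm_apply_eq_fin_five]
    split_ifs <;> simp
  rw [omegaG, finsum_eq_sum_of_fintype, ← sum_subtype {σ | IsCyclicPerm σ} (by simp)
    G.rho, sum_congr rfl fun σ _ => hrho σ, ← sum_div, sum_sub_distrib, sum_const,
    card_isCyclicPerm_fin_five, hpairs]
  ring

abbrev Components (G : CGraph C V) : Type :=
  Quotient (EqvGen.setoid fun v w : V => ∃ c, G.inv c v = w)

theorem g_eq_card_components_restrict (G : CGraph C V) (T : Set C) :
    G.g T = Nat.card (G.restrict T).Components := by
  simp only [g, Components, restrict, Subtype.exists, exists_prop]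

theorem g_eq_finsum_g_component [Finite V] (G : CGraph C V) {B T : Set C} (hBT : B ⊆ T) :
    G.g B = ∑ᶠ q : (G.restrict T).Components,
      ((G.restrict T).component q.out).g {c | c.val ∈ B} := by
  have hle : (fun v w => ∃ c ∈ B, G.inv c v = w) ≤ fun v w => ∃ c, (G.restrict T).inv c v = w :=
    fun v w ⟨c, hc, hvw⟩ => ⟨⟨c, hBT hc⟩, hvw⟩
  rw [g, EqvGen.card_quotient_eq_finsum hle]
  have hmem : ∀ c, c ∈ T ∧ c ∈ B ↔ c ∈ B := fun c => and_iff_right_of_imp (@hBT c)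
  refine finsum_congr fun q => ?_
  simp only [g, component, restrict, Subtype.ext_iff, Set.mem_ofPred_eq, Subtype.exists,
    exists_prop, ← and_assoc, hmem]
  rfl

theorem card_eq_finsum_card_component [Finite V] (G : CGraph C V) :
    Nat.card V = ∑ᶠ q : G.Components, Nat.card {w // G.reach q.out w} :=
  EqvGen.card_eq_finsum

theorem g_add_g_add_g_eq_of_singularCond [Finite V] {G : CGraph (Fin 5) V} (hG : G.SingularCond)
    {i j k : Fin 5} (hij : i ≠ j) (hik : i ≠ k) (hjk : j ≠ k) :
    (G.g {i, j} + G.g {i, k} + G.g {j, k} : ℚ) = Nat.card V / 2 + 2 * G.g {i, j, k} := by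
  set T : Set (Fin 5) := {i, j, k}
  have := Fintype.ofFinite (G.restrict T).Components
  have hpair : ∀ {a b}, a ∈ T → b ∈ T → (G.g {a, b} : ℚ) =
      ∑ q : (G.restrict T).Components,
        (((G.restrict T).component q.out).g {c | c.val = a ∨ c.val = b} : ℚ) := by
    intro a b ha hb
    rw [G.g_eq_finsum_g_component (Set.insert_subset ha (Set.singleton_subset_iff.2 hb)),
      finsum_eq_sum_of_fintype, Nat.cast_sum]
    rfl
  have hV : (Nat.card V : ℚ) = ∑ q : (G.restrict T).Components,
      (Nat.card {w // (G.restrict T).reach q.out w} : ℚ) := by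
    rw [(G.restrict T).card_eq_finsum_card_component, finsum_eq_sum_of_fintype, Nat.cast_sum]
  have hT : G.g T = Fintype.card (G.restrict T).Components := by
    rw [g_eq_card_components_restrict, Nat.card_eq_fintype_card]
  calc (G.g {i, j} + G.g {i, k} + G.g {j, k} : ℚ)
      = ∑ q : (G.restrict T).Components,
          ((Nat.card {w // (G.restrict T).reach q.out w} : ℚ) / 2 + 2) := by
        rw [hpair (by simp [T]) (by simp [T]), hpair (by simp [T]) (by simp [T]),
          hpair (by simp [T]) (by simp [T]), ← sum_add_distrib, ← sum_add_distrib]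
        exact sum_congr rfl fun q _ => hG i j k hij hik hjk q.out
    _ = Nat.card V / 2 + 2 * G.g T := by
        rw [sum_add_distrib, ← sum_div, ← hV, hT]
        simp [mul_comm]

theorem nine_mul_sum_g_pairs_eq_of_singularCond [Finite V] {G : CGraph (Fin 5) V}
    (hG : G.SingularCond) :
    9 * ∑ r, ∑ s, (if r = s then 0 else (G.g {r, s} : ℚ)) =
      30 * Nat.card V + 2 * ∑ r, ∑ s, ∑ t,
        if r ≠ s ∧ r ≠ t ∧ s ≠ t then (G.g {r, s, t} : ℚ) else 0 := by
  calc 9 * ∑ r, ∑ s, (if r = s then 0 else (G.g {r, s} : ℚ))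
      = ∑ r, ∑ s, ∑ t, if r ≠ s ∧ r ≠ t ∧ s ≠ t then
          (G.g {r, s} + G.g {r, t} + G.g {s, t} : ℚ) else 0 := by
        rw [sum_ite_distinct_triple_pairs, Fintype.card_fin]
        norm_num
    _ = ∑ r, ∑ s, ∑ t, if r ≠ s ∧ r ≠ t ∧ s ≠ t then
          (Nat.card V / 2 + 2 * G.g {r, s, t} : ℚ) else 0 := by
        refine sum_congr rfl fun r _ => sum_congr rfl fun s _ => sum_congr rfl fun t _ => ?_
        split_ifs with h
        · exact g_add_g_add_g_eq_of_singularCond hG h.1 h.2.1 h.2.2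
        · rfl
    _ = _ := by
        rw [sum_ite_distinct_affine_fin_five]
        ring

end CGraph

open CGraph in
/-- Theorem `G-degree(n=4)`, first and second relations: for a 5-colored
graph of order `2p`, `ω_G(Γ) = 3·(6(p−1) − Σ_{{r,s}}(g_{rs} − 1))`; if moreover `Γ` represents
a singular 4-manifold, then also `ω_G(Γ) = 8(p−1) − 2·Σ_{{r,s,t}}(g_{rst} − 1)` (unordered pair
and triple sums written as ordered sums divided by 2 resp. 6). -/
theorem stmt13 {p : ℕ} {V : Type} [Finite V]
    (G : CGraph (Fin 5) V) (hconn : G.Conn) (horder : Nat.card V = 2 * p) :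
    G.omegaG = 3 * (6 * ((p : ℚ) - 1) -
        (∑ r : Fin 5, ∑ s : Fin 5, if r = s then 0 else (G.g {r, s} : ℚ) - 1) / 2) ∧
      (G.SingularCond →
        G.omegaG = 8 * ((p : ℚ) - 1) -
          2 * ((∑ r : Fin 5, ∑ s : Fin 5, ∑ t : Fin 5,
            if r ≠ s ∧ r ≠ t ∧ s ≠ t then (G.g {r, s, t} : ℚ) - 1 else 0) / 6)) := by
  have hω := omegaG_eq_of_conn hconn
  rw [horder, Nat.cast_mul, Nat.cast_ofNat] at hω
  refine ⟨by rw [hω, sum_ite_ne_sub_one_fin_five]; ring, fun hsing => ?_⟩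
  have hpairs := nine_mul_sum_g_pairs_eq_of_singularCond hsing
  rw [horder, Nat.cast_mul, Nat.cast_ofNat] at hpairs
  rw [hω, sum_ite_distinct_sub_one_fin_five]
  linarith
end

section
/- Let (Γ,γ) be a 5-colored graph of order 2p, and let ε̄ be a cyclic permutation of Δ₄ realizing the regular genus, i.e. ρ(Γ) = ρ_{ε̄}(Γ). Then ω_G(Γ) − 12ρ(Γ) = 3·( Σ_{i∈Z₅} g_{ε̄_i ε̄_{i+1}} − Σ_{i∈Z₅} g_{ε̄_i ε̄_{i+2}} ). -/
/-
Over the 24 cyclic permutations of `Δ₄` every pair of colours is consecutive exactly 12 times,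
so `ω_G = 12·(g_Δ + 3p/2) - 3·Σ_{a<b} g_{ab}`,
while `12·ρ_{ε̄} = 12·(g_Δ + 3p/2) - 6·Σ_i g_{ε̄_iε̄_{i+1}}`.
For a single cyclic `ε̄` the consecutive pairs and the pairs at distance two are together all
ten pairs of colours, and the identity follows.
-/

open Finset

namespace CGraph

variable {C V : Type}

theorem rho_eq_s16 [Fintype C] (G : CGraph C V) (σ : Equiv.Perm C) :
    G.rho σ = G.g Set.univ - (∑ c, (G.g {c, σ c} : ℚ)) / 2 +
      ((Fintype.card C : ℚ) - 2) * Nat.card V / 4 := by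
  rw [rho, chi, finsum_eq_sum_of_fintype, Nat.card_eq_fintype_card]
  ring

theorem omegaG_eq_sum_s16 [Fintype C] [DecidableEq C] [DecidablePred (IsCyclicPerm (C := C))]
    (G : CGraph C V) : G.omegaG = (∑ σ ∈ univ.filter IsCyclicPerm, G.rho σ) / 2 := by
  rw [omegaG, finsum_eq_sum_of_fintype,
    ← sum_subtype (univ.filter IsCyclicPerm) (p := IsCyclicPerm) (by simp)]

end CGraph

namespace FinFive

open CGraph

theorem isCyclicPerm_iff_pow_eq_one (σ : Equiv.Perm (Fin 5)) :
    IsCyclicPerm σ ↔ σ ^ 5 = 1 ∧ σ ≠ 1 := by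
  constructor
  · rintro ⟨hcycle, hfree⟩
    have hsupp : σ.support = univ := by
      ext c
      simp [Equiv.Perm.mem_support, hfree c]
    have horder : orderOf σ = 5 := by
      rw [hcycle.orderOf, hsupp, card_univ, Fintype.card_fin]
    exact ⟨orderOf_dvd_iff_pow_eq_one.mp (by rw [horder]), fun h => hfree 0 (by simp [h])⟩
  · rintro ⟨hpow, hne⟩
    have horder : orderOf σ = 5 := orderOf_eq_prime (hp := ⟨by norm_num⟩) hpow hne
    have hcycle : σ.IsCycle :=
      σ.isCycle_of_prime_order' (by rw [horder]; norm_num) (by simp [horder])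
    have hsupp : σ.support = univ :=
      eq_univ_of_card _ (by rw [← hcycle.orderOf, horder, Fintype.card_fin])
    exact ⟨hcycle, fun c => Equiv.Perm.mem_support.mp (hsupp ▸ mem_univ c)⟩

-- A characterization the kernel evaluates fast, so the counting facts below follow by `decide`.
instance : DecidablePred (IsCyclicPerm (C := Fin 5)) := fun σ =>
  decidable_of_iff _ (isCyclicPerm_iff_pow_eq_one σ).symm

def consecutivePairs (σ : Equiv.Perm (Fin 5)) : Multiset (Finset (Fin 5)) :=
  univ.val.map fun c => {c, σ c}

set_option maxRecDepth 40000 in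
theorem card_filter_isCyclicPerm : #(univ.filter (IsCyclicPerm (C := Fin 5))) = 24 := by
  decide

set_option maxRecDepth 40000 in
theorem bind_consecutivePairs :
    (univ.filter (IsCyclicPerm (C := Fin 5))).val.bind consecutivePairs =
      12 • (univ.powersetCard 2).val := by
  decide

set_option maxRecDepth 40000 in
theorem consecutivePairs_add_consecutivePairs_mul_self :
    ∀ σ : Equiv.Perm (Fin 5), IsCyclicPerm σ →
      consecutivePairs σ + consecutivePairs (σ * σ) = (univ.powersetCard 2).val := by
  decide

variable {M : Type} [AddCommMonoid M]

theorem sum_pair_eq_sum_map_consecutivePairs (f : Finset (Fin 5) → M) (σ : Equiv.Perm (Fin 5)) :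
    ∑ c, f {c, σ c} = ((consecutivePairs σ).map f).sum := by
  rw [sum_eq_multiset_sum, consecutivePairs, Multiset.map_map]
  rfl

theorem sum_isCyclicPerm_sum_pair (f : Finset (Fin 5) → M) :
    ∑ σ ∈ univ.filter IsCyclicPerm, ∑ c, f {c, σ c} =
      12 • ∑ s ∈ univ.powersetCard 2, f s := by
  calc ∑ σ ∈ univ.filter IsCyclicPerm, ∑ c, f {c, σ c}
      = ∑ σ ∈ univ.filter IsCyclicPerm, ((consecutivePairs σ).map f).sum :=
        sum_congr rfl fun σ _ => sum_pair_eq_sum_map_consecutivePairs f σ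
    _ = (((univ.filter IsCyclicPerm).val.bind consecutivePairs).map f).sum := by
        rw [Multiset.map_bind, Multiset.sum_bind]
        rfl
    _ = 12 • ∑ s ∈ univ.powersetCard 2, f s := by
        rw [bind_consecutivePairs, Multiset.map_nsmul, Multiset.sum_nsmul]
        rfl

theorem sum_pair_add_sum_pair_apply_self {σ : Equiv.Perm (Fin 5)} (hσ : IsCyclicPerm σ)
    (f : Finset (Fin 5) → M) :
    ∑ c, f {c, σ c} + ∑ c, f {c, σ (σ c)} = ∑ s ∈ univ.powersetCard 2, f s := by
  have hsq : ∑ c, f {c, σ (σ c)} = ((consecutivePairs (σ * σ)).map f).sum :=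
    sum_pair_eq_sum_map_consecutivePairs f (σ * σ)
  rw [sum_pair_eq_sum_map_consecutivePairs, hsq, ← Multiset.sum_add, ← Multiset.map_add,
    consecutivePairs_add_consecutivePairs_mul_self σ hσ, sum_eq_multiset_sum]

end FinFive

open FinFive

theorem CGraph.omegaG_eq_fin_five {V : Type} (G : CGraph (Fin 5) V) :
    G.omegaG = 12 * (G.g Set.univ + 3 * Nat.card V / 4) -
      3 * ∑ s ∈ (univ : Finset (Fin 5)).powersetCard 2, (G.g s : ℚ) := by
  have hsum := sum_isCyclicPerm_sum_pair fun s : Finset (Fin 5) => (G.g s : ℚ)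
  simp only [coe_insert, coe_singleton] at hsum
  simp only [omegaG_eq_sum_s16, rho_eq_s16, Fintype.card_fin]
  rw [sum_add_distrib, sum_sub_distrib, ← sum_div, hsum, sum_const, sum_const,
    card_filter_isCyclicPerm]
  simp only [nsmul_eq_mul]
  push_cast
  ring

open CGraph in
theorem stmt16_general {V : Type}
    (G : CGraph (Fin 5) V)
    (σbar : Equiv.Perm (Fin 5)) (hσbar : IsCyclicPerm σbar) :
    G.omegaG - 12 * G.rho σbar =
      3 * ((∑ c : Fin 5, (G.g {c, σbar c} : ℚ)) -
        ∑ c : Fin 5, (G.g {c, σbar (σbar c)} : ℚ)) := by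
  have hpairs := sum_pair_add_sum_pair_apply_self hσbar fun s : Finset (Fin 5) => (G.g s : ℚ)
  simp only [coe_insert, coe_singleton] at hpairs
  rw [omegaG_eq_fin_five, rho_eq_s16, ← hpairs, Fintype.card_fin]
  ring

open CGraph in
/-- Proposition `G-degree-regulargenus(n=4)`: if `Γ` is a 5-colored graph of
order `2p` and `σ̄` (encoding the cyclic permutation `ε̄` of `Δ₄` via `σ̄ : ε̄_i ↦ ε̄_{i+1}`)
realizes the regular genus `ρ(Γ) = ρ_{ε̄}(Γ)`, then
`ω_G(Γ) − 12ρ(Γ) = 3·(Σ_{i∈Z₅} g_{ε̄_iε̄_{i+1}} − Σ_{i∈Z₅} g_{ε̄_iε̄_{i+2}})`;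
the consecutive pairs `{ε̄_i, ε̄_{i+1}}` are the pairs `{c, σ̄ c}` and the pairs
`{ε̄_i, ε̄_{i+2}}` are the pairs `{c, σ̄ (σ̄ c)}`. -/
theorem stmt16 {p : ℕ} {V : Type} [Finite V]
    (G : CGraph (Fin 5) V) (hconn : G.Conn) (horder : Nat.card V = 2 * p)
    (σbar : Equiv.Perm (Fin 5)) (hσbar : IsCyclicPerm σbar)
    (hmin : ∀ σ : Equiv.Perm (Fin 5), IsCyclicPerm σ → G.rho σbar ≤ G.rho σ) :
    G.omegaG - 12 * G.rho σbar =
      3 * ((∑ c : Fin 5, (G.g {c, σbar c} : ℚ)) -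
        ∑ c : Fin 5, (G.g {c, σbar (σbar c)} : ℚ)) :=
  stmt16_general G σbar hσbar
end

section
/- Let (Γ,γ) be a 5-colored graph of order 2p. If ω_G(Γ) = 12·ρ(Γ), then there exists a cyclic permutation ε̄ of Δ₄ with Σ_{i∈Z₅} g_{ε̄_i ε̄_{i+1}} = Σ_{i∈Z₅} g_{ε̄_i ε̄_{i+2}}. -/
/-!
Every genus `ρ_σ` is at least the regular genus `ρ`, and `ω_G` is half the sum of the `ρ_σ`
over the `4! = 24` cyclic permutations `σ`; so `ω_G = 12 ρ` forces `ρ_σ = ρ` for all of them.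
Apply this to `σ = (0 1 2 3 4)` and to `σ²`, which is again cyclic because `2` is coprime
to `5`: `ρ_σ = ρ_{σ²}` is exactly the required equality, since `{c, σ² c}` runs over the pairs
`{ε̄_i, ε̄_{i+2}}`.
-/

namespace CGraph

open Equiv Equiv.Perm Nat

section CyclicPerm

variable {C : Type} [Fintype C] [DecidableEq C] {σ : Perm C}

theorem isCyclicPerm_iff : IsCyclicPerm σ ↔ σ.IsCycle ∧ σ.support = Finset.univ := by
  simp only [IsCyclicPerm, Finset.eq_univ_iff_forall, mem_support]

theorem isCyclicPerm_finRotate (n : ℕ) : IsCyclicPerm (finRotate (n + 2)) :=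
  isCyclicPerm_iff.2 ⟨isCycle_finRotate, support_finRotate⟩

theorem IsCyclicPerm.orderOf_eq (hσ : IsCyclicPerm σ) : orderOf σ = Fintype.card C := by
  obtain ⟨hcycle, hsupp⟩ := isCyclicPerm_iff.1 hσ
  rw [hcycle.orderOf, hsupp, Finset.card_univ]

theorem IsCyclicPerm.pow_of_coprime (hσ : IsCyclicPerm σ) {n : ℕ}
    (hn : n.Coprime (Fintype.card C)) : IsCyclicPerm (σ ^ n) := by
  obtain ⟨hcycle, hsupp⟩ := isCyclicPerm_iff.1 hσ
  rw [← hσ.orderOf_eq] at hn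
  exact isCyclicPerm_iff.2 ⟨hcycle.pow_iff.2 hn, (support_pow_coprime hn).trans hsupp⟩

theorem isCyclicPerm_iff_cycleType : IsCyclicPerm σ ↔ σ.cycleType = {Fintype.card C} := by
  rw [isCyclicPerm_iff]
  constructor
  · rintro ⟨hcycle, hsupp⟩
    rw [hcycle.cycleType, hsupp, Finset.card_univ]
  · intro h
    refine ⟨card_cycleType_eq_one.1 (by simp [h]), Finset.eq_univ_of_card _ ?_⟩
    rw [← sum_cycleType, h, Multiset.sum_singleton]

theorem card_isCyclicPerm (hC : 2 ≤ Fintype.card C) :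
    Nat.card {σ : Perm C // IsCyclicPerm σ} = (Fintype.card C - 1)! := by
  rw [Nat.card_congr (Equiv.subtypeEquivRight fun _ => isCyclicPerm_iff_cycleType),
    Nat.card_eq_fintype_card, Fintype.card_subtype, card_of_cycleType_singleton hC le_rfl,
    Nat.choose_self, mul_one]

end CyclicPerm

variable {C V : Type}

theorem rho_eq_rho_iff [Fintype C] (G : CGraph C V) (σ τ : Perm C) :
    G.rho σ = G.rho τ ↔ ∑ c, G.g {c, σ c} = ∑ c, G.g {c, τ c} := by
  simp only [rho, chi, finsum_eq_sum_of_fintype]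
  constructor
  · intro h
    exact_mod_cast (by linarith : (∑ c, (G.g {c, σ c} : ℚ)) = ∑ c, (G.g {c, τ c} : ℚ))
  · intro h
    rw [← Nat.cast_sum, ← Nat.cast_sum, h]

theorem rho_eq_of_omegaG_eq [Finite C] (G : CGraph C V) {ρmin : ℚ}
    (hmin : IsLeast {x : ℚ | ∃ σ : Perm C, IsCyclicPerm σ ∧ G.rho σ = x} ρmin)
    (h : G.omegaG = Nat.card {σ : Perm C // IsCyclicPerm σ} / 2 * ρmin)
    {σ : Perm C} (hσ : IsCyclicPerm σ) : G.rho σ = ρmin := by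
  classical
  cases nonempty_fintype C
  have hsum : ∑ τ : {σ : Perm C // IsCyclicPerm σ}, G.rho τ =
      ∑ _τ : {σ : Perm C // IsCyclicPerm σ}, ρmin := by
    rw [omegaG, finsum_eq_sum_of_fintype, Nat.card_eq_fintype_card] at h
    rw [Finset.sum_const, Finset.card_univ, nsmul_eq_mul]
    linarith
  have hle : ∀ τ ∈ (Finset.univ : Finset {σ : Perm C // IsCyclicPerm σ}), ρmin ≤ G.rho τ :=
    fun τ _ => hmin.2 ⟨τ, τ.2, rfl⟩
  exact ((Finset.sum_eq_sum_iff_of_le hle).1 hsum.symm ⟨σ, hσ⟩ (Finset.mem_univ _)).symm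

end CGraph

open CGraph in
theorem stmt17_general {ρmin : ℚ} {V : Type}
    (G : CGraph (Fin 5) V)
    (hrho : IsLeast {x : ℚ | ∃ σ : Equiv.Perm (Fin 5), IsCyclicPerm σ ∧ G.rho σ = x} ρmin)
    (h : G.omegaG = 12 * ρmin) :
    ∃ σbar : Equiv.Perm (Fin 5), IsCyclicPerm σbar ∧
      (∑ c : Fin 5, G.g {c, σbar c}) = ∑ c : Fin 5, G.g {c, σbar (σbar c)} := by
  have hcard : Nat.card {σ : Equiv.Perm (Fin 5) // IsCyclicPerm σ} = 24 := by
    rw [card_isCyclicPerm (by simp), Fintype.card_fin]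
    rfl
  have hrho_eq : ∀ σ, IsCyclicPerm σ → G.rho σ = ρmin :=
    fun σ => G.rho_eq_of_omegaG_eq hrho (by rw [h, hcard]; norm_num)
  have hσ : IsCyclicPerm (finRotate 5) := isCyclicPerm_finRotate 3
  have hσ2 : IsCyclicPerm (finRotate 5 ^ 2) := hσ.pow_of_coprime (by norm_num)
  rw [sq] at hσ2
  exact ⟨finRotate 5, hσ, (rho_eq_rho_iff G (finRotate 5) (finRotate 5 * finRotate 5)).1
    ((hrho_eq _ hσ).trans (hrho_eq _ hσ2).symm)⟩

open CGraph in
/-- Proposition `uguaglianza_G-degree`(a): if `Γ` is a 5-colored graph of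
order `2p` with `ω_G(Γ) = 12·ρ(Γ)` (`ρmin` being the regular genus, i.e. the least of the
genera `ρ_σ(Γ)` over the cyclic permutations `σ`), then there exists a cyclic permutation `ε̄`
of `Δ₄` (encoded by `σ̄ : ε̄_i ↦ ε̄_{i+1}`) with
`Σ_{i∈Z₅} g_{ε̄_iε̄_{i+1}} = Σ_{i∈Z₅} g_{ε̄_iε̄_{i+2}}`. -/
theorem stmt17 {p : ℕ} {ρmin : ℚ} {V : Type} [Finite V]
    (G : CGraph (Fin 5) V) (hconn : G.Conn) (horder : Nat.card V = 2 * p)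
    (hrho : IsLeast {x : ℚ | ∃ σ : Equiv.Perm (Fin 5), IsCyclicPerm σ ∧ G.rho σ = x} ρmin)
    (h : G.omegaG = 12 * ρmin) :
    ∃ σbar : Equiv.Perm (Fin 5), IsCyclicPerm σbar ∧
      (∑ c : Fin 5, G.g {c, σbar c}) = ∑ c : Fin 5, G.g {c, σbar (σbar c)} :=
  stmt17_general G hrho h
end

section
/- Let d ≥ 3 and let (Γ,γ) be a (d+1)-colored graph. If (Γ′,γ′) is obtained from Γ by eliminating a 1-dipole, then ω_G(Γ′) = ω_G(Γ). -/
/-!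
Eliminating a 1-dipole `{v₁, v₂}` of color `c₀` acts on `B`-residues like contracting the
`c₀`-edge `v₁v₂`. If `c₀ ∈ B` the number `g_B` is unchanged; if `c₀ ∉ B`, the `B`-residues of
`v₁` and `v₂` are distinct (the dipole separates them) and get merged, so `g_B` drops by one.
The merging rests on the fact that an `{a, b}`-colored cycle through `v₁` becomes, once `v₁` is
removed, a path joining the two neighbours of `v₁`. For a cyclic permutation `σ` exactly two of
the pairs `{c, σ c}` contain `c₀`, so `Σ_c g_{c, σ c}` drops by `#C - 2`, which the loss of two
vertices compensates exactly in `χ_σ`; hence every `ρ_σ`, and `ω_G`, is unchanged.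
-/

open Relation Function

theorem reflTransGen_alternating_of_involutive {V : Type*} [Finite V] {i j : V → V}
    (hi : Involutive i) (hj : Involutive j) (hi' : ∀ v, i v ≠ v) (hj' : ∀ v, j v ≠ v)
    (v : V) : ReflTransGen (fun x y => y ≠ v ∧ (i x = y ∨ j x = y)) (i v) (j v) := by
  set τ : Equiv.Perm V := hj.toPerm j * hi.toPerm i
  have hτ : ∀ x, τ x = j (i x) := fun x => rfl
  have conj_zpow : ∀ (z : ℤ) x, i ((τ ^ (-z)) (i x)) = (τ ^ z) x := by
    have h : MulAut.conj (hi.toPerm i) τ = τ⁻¹ := by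
      ext x
      simp [τ, MulAut.conj_apply, hi.toPerm_symm, hj.toPerm_symm, hi x]
    intro z x
    have := congrArg (· x) (map_zpow (MulAut.conj (hi.toPerm i)) τ (-z))
    simpa [h, MulAut.conj_apply, hi.toPerm_symm] using this
  -- Conjugation by `i` inverts `τ`, so an `i`-step back to `v` would make the `τ`-orbit of `v`
  -- a palindrome whose middle is a fixed point of `i` or of `j`.
  have not_mirror : ∀ k : ℕ, i ((τ ^ k) v) ≠ v := by
    intro k hk
    have hk' := congrArg i hk
    rw [hi] at hk'
    have mirror : ∀ z : ℤ, i ((τ ^ (k - z)) v) = (τ ^ z) v := fun z => by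
      rw [sub_eq_neg_add, zpow_add, Equiv.Perm.mul_apply, zpow_natCast, hk', conj_zpow]
    obtain ⟨m, hm | hm⟩ := Int.even_or_odd' k
    · exact hi' _ (by simpa [hm, two_mul] using mirror m)
    · have h := congrArg i (mirror m)
      rw [hm, show 2 * m + 1 - m = 1 + m by ring, zpow_add, Equiv.Perm.mul_apply, zpow_one,
        hτ, hi] at h
      exact hj' _ h
  let R : V → V → Prop := fun x y => y ≠ v ∧ (i x = y ∨ j x = y)
  obtain ⟨n, hn⟩ : ∃ n, minimalPeriod τ v = n + 1 :=
    Nat.exists_eq_add_one.mpr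
      (minimalPeriod_pos_of_mem_periodicPts (τ.injective.mem_periodicPts v))
  have path : ∀ k ≤ n, ReflTransGen R (i v) (i ((τ ^ k) v)) := by
    intro k hk
    induction k with
    | zero => exact .refl
    | succ k ih =>
      have hne : (τ ^ (k + 1)) v ≠ v := by
        rw [← Equiv.Perm.iterate_eq_pow]
        exact not_isPeriodicPt_of_pos_of_lt_minimalPeriod k.succ_ne_zero (by rw [hn]; omega)
      have step_j : R (i ((τ ^ k) v)) ((τ ^ (k + 1)) v) :=
        ⟨hne, .inr (by rw [pow_succ', Equiv.Perm.mul_apply, hτ])⟩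
      have step_i : R ((τ ^ (k + 1)) v) (i ((τ ^ (k + 1)) v)) := ⟨not_mirror _, .inl rfl⟩
      exact ((ih (by omega)).tail step_j).tail step_i
  have hperiod : j (i ((τ ^ n) v)) = v := by
    rw [← hτ, ← Equiv.Perm.mul_apply, ← pow_succ', ← hn, ← Equiv.Perm.iterate_eq_pow]
    exact iterate_minimalPeriod
  have hlast := congrArg j hperiod
  rw [hj] at hlast
  exact hlast ▸ path n le_rfl

namespace Relation

variable {α β : Type*}

theorem EqvGen.lift {r : α → α → Prop} {s : β → β → Prop} (f : α → β)
    (h : ∀ a b, r a b → EqvGen s (f a) (f b)) {a b : α} (hab : EqvGen r a b) :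
    EqvGen s (f a) (f b) := by
  induction hab with
  | rel x y hxy => exact h x y hxy
  | refl x => exact .refl _
  | symm x y _ ih => exact ih.symm
  | trans x y z _ _ ih₁ ih₂ => exact ih₁.trans _ _ _ ih₂

noncomputable def numComponents (r : α → α → Prop) : ℕ := Nat.card (Quotient (EqvGen.setoid r))

def withEdge (r : α → α → Prop) (p q : α) : α → α → Prop := fun x y => r x y ∨ x = p ∧ y = q

theorem numComponents_eq_of_maps {r : α → α → Prop} {s : β → β → Prop} (f : α → β) (g : β → α)
    (hf : ∀ a a', r a a' → EqvGen s (f a) (f a'))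
    (hg : ∀ b b', s b b' → EqvGen r (g b) (g b'))
    (hgf : ∀ a, EqvGen r (g (f a)) a) (hfg : ∀ b, EqvGen s (f (g b)) b) :
    numComponents r = numComponents s :=
  Nat.card_congr
    { toFun := Quotient.map' f fun _ _ h => h.lift f hf
      invFun := Quotient.map' g fun _ _ h => h.lift g hg
      left_inv := fun x => Quotient.inductionOn x fun a => Quotient.sound (hgf a)
      right_inv := fun y => Quotient.inductionOn y fun b => Quotient.sound (hfg b) }

theorem numComponents_withEdge_of_eqvGen {r : α → α → Prop} {p q : α} (h : EqvGen r p q) :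
    numComponents (withEdge r p q) = numComponents r := by
  refine numComponents_eq_of_maps id id ?_ (fun a b hab => .rel _ _ (.inl hab))
    (fun _ => .refl _) (fun _ => .refl _)
  rintro a b (hab | ⟨rfl, rfl⟩)
  exacts [.rel _ _ hab, h]

theorem numComponents_eq_numComponents_withEdge_add_one [Finite α] {r : α → α → Prop} {p q : α}
    (h : ¬ EqvGen r p q) : numComponents r = numComponents (withEdge r p q) + 1 := by
  classical
  let Q := Quotient (EqvGen.setoid r)
  have hpq : (⟦p⟧ : Q) ≠ ⟦q⟧ := fun he => h (Quotient.exact he)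
  let F : α → {x : Q // x ≠ ⟦q⟧} := fun a =>
    if ha : EqvGen r a q then ⟨⟦p⟧, hpq⟩ else ⟨⟦a⟧, fun he => ha (Quotient.exact he)⟩
  have hF : ∀ a b, withEdge r p q a b → F a = F b := by
    rintro a b (hab | ⟨rfl, rfl⟩)
    · by_cases ha : EqvGen r a q
      · have hb : EqvGen r b q := (EqvGen.rel _ _ hab).symm.trans _ _ _ ha
        simp only [F, dif_pos ha, dif_pos hb]
      · have hb : ¬ EqvGen r b q := fun hb => ha ((EqvGen.rel _ _ hab).trans _ _ _ hb)
        simp only [F, dif_neg ha, dif_neg hb]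
        exact Subtype.ext (Quotient.sound (.rel _ _ hab))
    · simp only [F, dif_neg h, dif_pos (EqvGen.refl _)]
  have hr : ∀ a b, r a b → EqvGen (withEdge r p q) a b := fun a b hab => .rel _ _ (.inl hab)
  have e : Quotient (EqvGen.setoid (withEdge r p q)) ≃ {x : Q // x ≠ ⟦q⟧} :=
    { toFun := Quotient.lift F fun a b hab => by
        induction hab with
        | rel x y hxy => exact hF x y hxy
        | refl x => rfl
        | symm x y _ ih => exact ih.symm
        | trans x y z _ _ ih₁ ih₂ => exact ih₁.trans ih₂
      invFun := fun x => Quotient.map' id (fun a b (hab : EqvGen r a b) => hab.lift id hr) x.val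
      left_inv := fun x => Quotient.inductionOn x fun a => by
        by_cases ha : EqvGen r a q
        · simp only [F, Quotient.lift_mk, dif_pos ha]
          exact Quotient.sound ((EqvGen.rel _ _ (.inr ⟨rfl, rfl⟩)).trans _ _ _
            (ha.lift id hr).symm)
        · simp only [F, Quotient.lift_mk, dif_neg ha]
          rfl
      right_inv := fun ⟨x, hx⟩ => by
        induction x using Quotient.inductionOn with
        | h a =>
          have ha : ¬ EqvGen r a q := fun he => hx (Quotient.sound he)
          simp only [F, Quotient.map'_mk'', id, Quotient.lift_mk, dif_neg ha] }
  rw [numComponents, numComponents, Nat.card_congr e, ← Finite.card_option,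
    Nat.card_congr (Equiv.optionSubtypeNe _)]

end Relation

theorem Equiv.Perm.card_filter_eq_or_apply_eq {C : Type*} [Fintype C] [DecidableEq C]
    {σ : Equiv.Perm C} {c₀ : C} (h : σ c₀ ≠ c₀) :
    (Finset.univ.filter fun c => c = c₀ ∨ σ c = c₀).card = 2 := by
  have hfilter : (Finset.univ.filter fun c => c = c₀ ∨ σ c = c₀) = {c₀, σ.symm c₀} := by
    ext c
    simp [σ.eq_symm_apply]
  exact hfilter ▸ Finset.card_pair fun h' => h (by simpa using congrArg σ h')

theorem Nat.card_subtype_ne_and_ne_add_two {V : Type*} [Finite V] {v₁ v₂ : V} (h : v₁ ≠ v₂) :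
    Nat.card {w : V // w ≠ v₁ ∧ w ≠ v₂} + 2 = Nat.card V := by
  classical
  have := Fintype.ofFinite V
  rw [Nat.card_eq_fintype_card, Nat.card_eq_fintype_card, Fintype.card_subtype]
  have hcompl : (Finset.univ.filter fun w : V => w ≠ v₁ ∧ w ≠ v₂) = ({v₁, v₂} : Finset V)ᶜ := by
    ext; simp
  have hle : 2 ≤ Fintype.card V := by
    rw [← Finset.card_pair h]; exact Finset.card_le_univ _
  rw [hcompl, Finset.card_compl, Finset.card_pair h]
  omega

namespace CGraph

variable {C V : Type}

def adj (G : CGraph C V) (B : Set C) : V → V → Prop := fun v w => ∃ c ∈ B, G.inv c v = w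

theorem g_eq_numComponents (G : CGraph C V) (B : Set C) : G.g B = numComponents (G.adj B) := rfl

theorem adj_mono (G : CGraph C V) {B B' : Set C} (h : B ⊆ B') : G.adj B ≤ G.adj B' :=
  fun _ _ ⟨c, hc, he⟩ => ⟨c, h hc, he⟩

theorem reach_restrict_inv (G : CGraph C V) {B : Set C} {c : C} (hc : c ∈ B) (v : V) :
    (G.restrict B).reach v (G.inv c v) :=
  .rel _ _ ⟨⟨c, hc⟩, rfl⟩

theorem reach_restrict_of_eqvGen_adj (G : CGraph C V) {B B' : Set C} (hB : B ⊆ B') {v w : V}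
    (h : EqvGen (G.adj B) v w) : (G.restrict B').reach v w :=
  h.mono fun _ _ ⟨c, hc, he⟩ => ⟨⟨c, hB hc⟩, he⟩

def IsWelding [DecidableEq V] (G : CGraph C V) (v₁ v₂ : V)
    (G' : CGraph C {w : V // w ≠ v₁ ∧ w ≠ v₂}) : Prop :=
  ∀ c w, (G'.inv c w).val =
    if G.inv c w.val = v₁ then G.inv c v₂
    else if G.inv c w.val = v₂ then G.inv c v₁
    else G.inv c w.val

section Welding

variable [DecidableEq V] {G : CGraph C V} {v₁ v₂ : V} {G' : CGraph C {w : V // w ≠ v₁ ∧ w ≠ v₂}}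

theorem IsWelding.inv_mk (hG' : G.IsWelding v₁ v₂ G') (c : C) {u w : V}
    (hu : u ≠ v₁ ∧ u ≠ v₂) (hw : w ≠ v₁ ∧ w ≠ v₂) (h : G.inv c u = w) :
    G'.inv c ⟨u, hu⟩ = ⟨w, hw⟩ := by
  refine Subtype.ext ?_
  rw [hG', h, if_neg hw.1, if_neg hw.2]

theorem IsWelding.inv_mk_inv (hG' : G.IsWelding v₁ v₂ G') (c : C)
    (h₁ : G.inv c v₁ ≠ v₁ ∧ G.inv c v₁ ≠ v₂) (h₂ : G.inv c v₂ ≠ v₁ ∧ G.inv c v₂ ≠ v₂) :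
    G'.inv c ⟨G.inv c v₁, h₁⟩ = ⟨G.inv c v₂, h₂⟩ := by
  refine Subtype.ext ?_
  rw [hG', G.invol, if_pos rfl]

theorem IsWelding.eqvGen_withEdge (hG' : G.IsWelding v₁ v₂ G') {B : Set C} {u w}
    (h : G'.adj B u w) : EqvGen (withEdge (G.adj B) v₁ v₂) u.val w.val := by
  obtain ⟨c, hc, rfl⟩ := h
  have step : ∀ x y, G.inv c x = y → EqvGen (withEdge (G.adj B) v₁ v₂) x y :=
    fun x y hxy => .rel _ _ (.inl ⟨c, hc, hxy⟩)
  have edge : EqvGen (withEdge (G.adj B) v₁ v₂) v₁ v₂ := .rel _ _ (.inr ⟨rfl, rfl⟩)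
  rw [hG']
  split_ifs with h₁ h₂
  · exact (step _ _ h₁).trans _ _ _ (edge.trans _ _ _ (step _ _ rfl))
  · exact (step _ _ h₂).trans _ _ _ (edge.symm.trans _ _ _ (step _ _ rfl))
  · exact step _ _ rfl

def collapse (base : {w : V // w ≠ v₁ ∧ w ≠ v₂}) (v : V) : {w : V // w ≠ v₁ ∧ w ≠ v₂} :=
  if h : v ≠ v₁ ∧ v ≠ v₂ then ⟨v, h⟩ else base

end Welding

section Separated

variable {G : CGraph C V} {c₀ : C} {v₁ v₂ : V}

theorem ne_of_not_reach (hsep : ¬ (G.restrict {c | c ≠ c₀}).reach v₁ v₂) : v₁ ≠ v₂ :=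
  fun h => hsep (h ▸ .refl _)

theorem inv_left_mem (hsep : ¬ (G.restrict {c | c ≠ c₀}).reach v₁ v₂) {c : C} (hc : c ≠ c₀) :
    G.inv c v₁ ≠ v₁ ∧ G.inv c v₁ ≠ v₂ :=
  ⟨G.no_fixed c v₁, fun h => hsep (h ▸ G.reach_restrict_inv hc v₁)⟩

theorem inv_right_mem (hsep : ¬ (G.restrict {c | c ≠ c₀}).reach v₁ v₂) {c : C} (hc : c ≠ c₀) :
    G.inv c v₂ ≠ v₁ ∧ G.inv c v₂ ≠ v₂ :=
  ⟨fun h => hsep (h ▸ G.reach_restrict_inv hc v₂).symm, G.no_fixed c v₂⟩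

variable [DecidableEq V] [Finite V] {G' : CGraph C {w : V // w ≠ v₁ ∧ w ≠ v₂}}

theorem IsWelding.eqvGen_inv_inv (hG' : G.IsWelding v₁ v₂ G')
    (hsep : ¬ (G.restrict {c | c ≠ c₀}).reach v₁ v₂) {a b : C} (ha : a ≠ c₀) (hb : b ≠ c₀) :
    EqvGen (G'.adj {a, b}) ⟨G.inv a v₁, inv_left_mem hsep ha⟩
      ⟨G.inv b v₁, inv_left_mem hsep hb⟩ := by
  have key : ∀ y, ReflTransGen (fun x y => y ≠ v₁ ∧ (G.inv a x = y ∨ G.inv b x = y))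
      (G.inv a v₁) y → (G.restrict {c | c ≠ c₀}).reach v₁ y ∧
        ∃ hy : y ≠ v₁ ∧ y ≠ v₂,
          EqvGen (G'.adj {a, b}) ⟨G.inv a v₁, inv_left_mem hsep ha⟩ ⟨y, hy⟩ := by
    intro y hy
    induction hy with
    | refl => exact ⟨G.reach_restrict_inv ha v₁, inv_left_mem hsep ha, .refl _⟩
    | @tail x y _ hxy ih =>
      obtain ⟨hreach, hx, hpath⟩ := ih
      obtain ⟨c, hc, hcc₀, hxy'⟩ : ∃ c ∈ ({a, b} : Set C), c ≠ c₀ ∧ G.inv c x = y := by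
        rcases hxy.2 with h | h
        exacts [⟨a, .inl rfl, ha, h⟩, ⟨b, .inr rfl, hb, h⟩]
      have hreach' : (G.restrict {c | c ≠ c₀}).reach v₁ y :=
        hreach.trans _ _ _ (hxy' ▸ G.reach_restrict_inv hcc₀ x)
      have hy : y ≠ v₁ ∧ y ≠ v₂ := ⟨hxy.1, fun h => hsep (h ▸ hreach')⟩
      exact ⟨hreach', hy, hpath.trans _ _ _ (.rel _ _ ⟨c, hc, hG'.inv_mk c hx hy hxy'⟩)⟩
  exact (key _ (reflTransGen_alternating_of_involutive (G.invol a) (G.invol b)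
    (G.no_fixed a) (G.no_fixed b) v₁)).2.2

theorem IsWelding.eqvGen_adj_inv_inv (hG' : G.IsWelding v₁ v₂ G')
    (hsep : ¬ (G.restrict {c | c ≠ c₀}).reach v₁ v₂) {B : Set C} {a b : C} (ha : a ∈ B)
    (hac₀ : a ≠ c₀) (hb : b ∈ B) (hbc₀ : b ≠ c₀) :
    EqvGen (G'.adj B) ⟨G.inv a v₁, inv_left_mem hsep hac₀⟩
      ⟨G.inv b v₁, inv_left_mem hsep hbc₀⟩ :=
  (hG'.eqvGen_inv_inv hsep hac₀ hbc₀).mono (G'.adj_mono (Set.pair_subset ha hb))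

theorem IsWelding.eqvGen_collapse_of_inv_eq (hG' : G.IsWelding v₁ v₂ G')
    (hv : G.inv c₀ v₁ = v₂) (hsep : ¬ (G.restrict {c | c ≠ c₀}).reach v₁ v₂) {B : Set C}
    {b₀ : C} (hb₀ : b₀ ∈ B) (hb₀c₀ : b₀ ≠ c₀) {c : C} (hc : c ∈ B) {x y : V}
    (hxy : G.inv c x = y) (hy : y = v₁ ∨ y = v₂) :
    EqvGen (G'.adj B) (collapse ⟨G.inv b₀ v₁, inv_left_mem hsep hb₀c₀⟩ x)
      (collapse ⟨G.inv b₀ v₁, inv_left_mem hsep hb₀c₀⟩ y) := by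
  have hcy : collapse ⟨G.inv b₀ v₁, inv_left_mem hsep hb₀c₀⟩ y = ⟨G.inv b₀ v₁, _⟩ :=
    dif_neg (by tauto)
  rw [hcy, collapse]
  split_ifs with hx
  swap
  · exact .refl _
  obtain rfl : x = G.inv c y := by rw [← hxy, G.invol]
  have hcc₀ : c ≠ c₀ := by
    rintro rfl
    rcases hy with h | h <;> subst y
    · exact hx.2 hv
    · exact hx.1 (by rw [← hv, G.invol])
  have to_base := (hG'.eqvGen_adj_inv_inv hsep hb₀ hb₀c₀ hc hcc₀).symm
  rcases hy with h | h <;> subst y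
  · exact to_base
  · exact (EqvGen.rel _ _ ⟨c, hc, hG'.inv_mk_inv c (inv_left_mem hsep hcc₀)
      (inv_right_mem hsep hcc₀)⟩).symm.trans _ _ _ to_base

theorem IsWelding.eqvGen_collapse_of_withEdge (hG' : G.IsWelding v₁ v₂ G')
    (hv : G.inv c₀ v₁ = v₂) (hsep : ¬ (G.restrict {c | c ≠ c₀}).reach v₁ v₂) {B : Set C}
    {b₀ : C} (hb₀ : b₀ ∈ B) (hb₀c₀ : b₀ ≠ c₀) {x y : V} (h : withEdge (G.adj B) v₁ v₂ x y) :
    EqvGen (G'.adj B) (collapse ⟨G.inv b₀ v₁, inv_left_mem hsep hb₀c₀⟩ x)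
      (collapse ⟨G.inv b₀ v₁, inv_left_mem hsep hb₀c₀⟩ y) := by
  rcases h with ⟨c, hc, hxy⟩ | ⟨hx, hy⟩
  · by_cases hy : y ≠ v₁ ∧ y ≠ v₂
    · by_cases hx : x ≠ v₁ ∧ x ≠ v₂
      · rw [collapse, collapse, dif_pos hx, dif_pos hy]
        exact .rel _ _ ⟨c, hc, hG'.inv_mk c hx hy hxy⟩
      · exact (hG'.eqvGen_collapse_of_inv_eq hv hsep hb₀ hb₀c₀ hc
          (by rw [← hxy, G.invol]) (by tauto)).symm
    · exact hG'.eqvGen_collapse_of_inv_eq hv hsep hb₀ hb₀c₀ hc hxy (by tauto)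
  · rw [collapse, collapse, dif_neg (by tauto), dif_neg (by tauto)]
    exact .refl _

theorem IsWelding.g_eq_numComponents_withEdge (hG' : G.IsWelding v₁ v₂ G')
    (hv : G.inv c₀ v₁ = v₂) (hsep : ¬ (G.restrict {c | c ≠ c₀}).reach v₁ v₂) {B : Set C}
    {b₀ : C} (hb₀ : b₀ ∈ B) (hb₀c₀ : b₀ ≠ c₀) :
    G'.g B = numComponents (withEdge (G.adj B) v₁ v₂) := by
  refine numComponents_eq_of_maps Subtype.val (collapse ⟨G.inv b₀ v₁, inv_left_mem hsep hb₀c₀⟩)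
    (fun _ _ h => hG'.eqvGen_withEdge h)
    (fun _ _ h => hG'.eqvGen_collapse_of_withEdge hv hsep hb₀ hb₀c₀ h)
    (fun u => by rw [collapse, dif_pos u.2]; exact .refl _) (fun v => ?_)
  rw [collapse]
  split_ifs with hv'
  · exact .refl _
  · have to_v₁ : EqvGen (withEdge (G.adj B) v₁ v₂) (G.inv b₀ v₁) v₁ :=
      .rel _ _ (.inl ⟨b₀, hb₀, G.invol _ _⟩)
    rcases (by tauto : v = v₁ ∨ v = v₂) with h | h <;> subst v
    · exact to_v₁
    · exact to_v₁.trans _ _ _ (.rel _ _ (.inr ⟨rfl, rfl⟩))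

theorem IsWelding.g_eq_of_mem (hG' : G.IsWelding v₁ v₂ G') (hv : G.inv c₀ v₁ = v₂)
    (hsep : ¬ (G.restrict {c | c ≠ c₀}).reach v₁ v₂) {B : Set C} (hc₀ : c₀ ∈ B) {b₀ : C}
    (hb₀ : b₀ ∈ B) (hb₀c₀ : b₀ ≠ c₀) : G'.g B = G.g B := by
  rw [hG'.g_eq_numComponents_withEdge hv hsep hb₀ hb₀c₀,
    numComponents_withEdge_of_eqvGen (.rel _ _ ⟨c₀, hc₀, hv⟩), g_eq_numComponents]

theorem IsWelding.g_eq_add_one_of_not_mem (hG' : G.IsWelding v₁ v₂ G') (hv : G.inv c₀ v₁ = v₂)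
    (hsep : ¬ (G.restrict {c | c ≠ c₀}).reach v₁ v₂) {B : Set C} (hc₀ : c₀ ∉ B) {b₀ : C}
    (hb₀ : b₀ ∈ B) : G.g B = G'.g B + 1 := by
  rw [hG'.g_eq_numComponents_withEdge hv hsep hb₀ (ne_of_mem_of_not_mem hb₀ hc₀),
    g_eq_numComponents]
  exact numComponents_eq_numComponents_withEdge_add_one fun h =>
    hsep (G.reach_restrict_of_eqvGen_adj (fun c hc => ne_of_mem_of_not_mem hc hc₀) h)

theorem IsWelding.chi_eq [Fintype C] (hG' : G.IsWelding v₁ v₂ G')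
    (hv : G.inv c₀ v₁ = v₂) (hsep : ¬ (G.restrict {c | c ≠ c₀}).reach v₁ v₂)
    {σ : Equiv.Perm C} (hσ : ∀ c, σ c ≠ c) : G'.chi σ = G.chi σ := by
  classical
  have pair : ∀ c, (G'.g {c, σ c} : ℚ) + 1 = G.g {c, σ c} + if c = c₀ ∨ σ c = c₀ then 1 else 0 := by
    intro c
    obtain ⟨b, hb, hbc₀⟩ : ∃ b ∈ ({c, σ c} : Set C), b ≠ c₀ := by
      by_cases hc : c = c₀
      · exact ⟨σ c, .inr rfl, hc ▸ hσ c⟩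
      · exact ⟨c, .inl rfl, hc⟩
    split_ifs with h
    · rw [hG'.g_eq_of_mem hv hsep (by rcases h with h | h <;> simp [h]) hb hbc₀]
    · rw [hG'.g_eq_add_one_of_not_mem hv hsep (by simpa [eq_comm] using h) hb]
      push_cast
      ring
  have hsum : ∑ c, (G'.g {c, σ c} : ℚ) + Fintype.card C = ∑ c, (G.g {c, σ c} : ℚ) + 2 := by
    have := Finset.sum_congr rfl fun c (_ : c ∈ Finset.univ) => pair c
    rw [Finset.sum_add_distrib, Finset.sum_add_distrib, Finset.sum_boole,
      Equiv.Perm.card_filter_eq_or_apply_eq (hσ c₀)] at this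
    simpa using this
  have hcard : (Nat.card {w : V // w ≠ v₁ ∧ w ≠ v₂} : ℚ) + 2 = Nat.card V := mod_cast
    Nat.card_subtype_ne_and_ne_add_two (ne_of_not_reach hsep)
  rw [chi, chi, finsum_eq_sum_of_fintype, finsum_eq_sum_of_fintype, Nat.card_eq_fintype_card]
  linear_combination hsum + (2 - Fintype.card C : ℚ) / 2 * hcard

theorem IsWelding.omegaG_eq [Fintype C] (hG' : G.IsWelding v₁ v₂ G')
    (hv : G.inv c₀ v₁ = v₂) (hsep : ¬ (G.restrict {c | c ≠ c₀}).reach v₁ v₂) :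
    G'.omegaG = G.omegaG := by
  refine congrArg (· / 2) (finsum_congr fun ⟨σ, _, hσ⟩ => ?_)
  rw [rho, rho, hG'.chi_eq hv hsep hσ,
    hG'.g_eq_of_mem hv hsep (Set.mem_univ c₀) (Set.mem_univ (σ c₀)) (hσ c₀)]

end Separated

end CGraph

open CGraph in
theorem stmt19_general {d : ℕ} {V : Type} [Finite V] [DecidableEq V]
    (G : CGraph (Fin (d + 1)) V) (c0 : Fin (d + 1)) (v1 : V)
    (hsep : ¬ (G.restrict {c | c ≠ c0}).reach v1 (G.inv c0 v1))
    (G' : CGraph (Fin (d + 1)) {w : V // w ≠ v1 ∧ w ≠ G.inv c0 v1})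
    (hG' : ∀ (c : Fin (d + 1)) (w : {w : V // w ≠ v1 ∧ w ≠ G.inv c0 v1}),
      (G'.inv c w).val =
        if G.inv c w.val = v1 then G.inv c (G.inv c0 v1)
        else if G.inv c w.val = G.inv c0 v1 then G.inv c v1
        else G.inv c w.val) :
    G'.omegaG = G.omegaG :=
  IsWelding.omegaG_eq hG' rfl hsep

open CGraph in
/-- invariance of the G-degree under 1-dipole elimination, cf. Remark
`G-degree_cryst`: let `Γ` be a `(d+1)`-colored graph (`d ≥ 3`) containing a 1-dipole of color
`c0` with endpoints `v1` and `v2 = Γ.inv c0 v1`, i.e. `v1, v2` are joined by exactly one edge,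
which is `c0`-colored (`hone`), and they lie in different connected components of
`Γ_{Δ_d∖{c0}}` (`hsep`).  If `Γ'` is the `(d+1)`-colored graph obtained by eliminating the
dipole — its vertices are those of `Γ` except `v1, v2`, and for each color `c` the hanging
`c`-colored half-edges at the former `c`-neighbors of `v1` and of `v2` are welded together
(`hG'`) — then `ω_G(Γ') = ω_G(Γ)`. -/
theorem stmt19 {d : ℕ} (hd : 3 ≤ d) {V : Type} [Finite V] [DecidableEq V]
    (G : CGraph (Fin (d + 1)) V) (hconn : G.Conn) (c0 : Fin (d + 1)) (v1 : V)
    (hone : ∀ c : Fin (d + 1), c ≠ c0 → G.inv c v1 ≠ G.inv c0 v1)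
    (hsep : ¬ (G.restrict {c | c ≠ c0}).reach v1 (G.inv c0 v1))
    (G' : CGraph (Fin (d + 1)) {w : V // w ≠ v1 ∧ w ≠ G.inv c0 v1})
    (hG' : ∀ (c : Fin (d + 1)) (w : {w : V // w ≠ v1 ∧ w ≠ G.inv c0 v1}),
      (G'.inv c w).val =
        if G.inv c w.val = v1 then G.inv c (G.inv c0 v1)
        else if G.inv c w.val = G.inv c0 v1 then G.inv c v1
        else G.inv c w.val) :
    G'.omegaG = G.omegaG :=
  stmt19_general G c0 v1 hsep G' hG'
end
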